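/- arXiv:2302.00835 — 6 statements merged into one kernel-verified Lean document; each statement's English description precedes it below -/
import Mathlib

section
/- If T is a tree with diameter d (measured in edges) and A is a real symmetric matrix whose underlying graph is T, then A has at least d+1 distinct eigenvalues. -/
open Matrix Polynomial

/-- A real symmetric matrix `A` has underlying graph `G` if for `i ≠ j`,
`A i j ≠ 0` iff `ij` is an edge of `G`. -/
def MatchesGraph {α : Type*} (A : Matrix α α ℝ) (G : SimpleGraph α) : Prop :=
  ∀ i j, i ≠ j → (A i j ≠ 0 ↔ G.Adj i j)

/-- The set of distinct (real) eigenvalues of a matrix, as roots of its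
characteristic polynomial. -/
noncomputable def distEig {α : Type*} [Fintype α] [DecidableEq α]
    (A : Matrix α α ℝ) : Finset ℝ :=
  A.charpoly.roots.toFinset

/-- `G` has diameter `d` (number of edges of a longest shortest path). -/
def HasDiamG {α : Type*} (G : SimpleGraph α) (d : ℕ) : Prop :=
  (∃ u v, G.dist u v = d) ∧ ∀ u v, G.dist u v ≤ d

/-!
Let `q` be a nonzero polynomial with `q(A) = 0`, and let `u`, `v` be vertices at distance
`q.natDegree`. Since `A` is supported on the edges and the diagonal, `(A ^ i) u v = 0` for
`i < dist u v`, while `(A ^ dist u v) u v` is the product of the weights along the unique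
`u`–`v` path of the tree, hence nonzero. So `q(A) u v` is its leading coefficient times a nonzero
number, a contradiction: every annihilating polynomial has degree at least `d + 1`.
As `A` is symmetric, `∏ (X - μ)` over its distinct eigenvalues `μ` annihilates `A`.
-/

namespace SimpleGraph

variable {V : Type*} {G : SimpleGraph V} {u v : V} {k : ℕ}

lemma exists_adj_dist_eq_of_dist_eq_add_one (h : G.dist u v = k + 1) :
    ∃ w, G.Adj u w ∧ G.dist w v = k := by
  obtain ⟨p, hp⟩ := exists_walk_of_dist_ne_zero (by rw [h]; omega)
  rw [h] at hp
  cases p with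
  | nil => simp at hp
  | cons hadj q =>
    rw [Walk.length_cons, Nat.add_right_cancel_iff] at hp
    refine ⟨_, hadj, le_antisymm (hp ▸ dist_le q) ?_⟩
    have := hadj.diff_dist_adj (u := v)
    rw [dist_comm, dist_comm (u := v)] at this
    omega

lemma exists_dist_eq_of_le (h : G.dist u v = k) {j : ℕ} (hj : j ≤ k) :
    ∃ w, G.Reachable w v ∧ G.dist w v = j := by
  induction k generalizing u with
  | zero => exact ⟨v, .refl v, by simp; omega⟩
  | succ k ih =>
    rcases hj.eq_or_lt with rfl | hj
    · exact ⟨u, Reachable.of_dist_ne_zero (by omega), h⟩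
    obtain ⟨w, -, hw⟩ := exists_adj_dist_eq_of_dist_eq_add_one h
    exact ih hw (by omega)

/-- Both neighbours are the second vertex of the unique path from `u` to `v`. -/
lemma IsAcyclic.eq_of_adj_of_dist_eq (hG : G.IsAcyclic) (h : G.dist u v = k + 1) {w₁ w₂ : V}
    (h₁ : G.Adj u w₁) (h₂ : G.Adj u w₂) (hd₁ : G.dist w₁ v = k) (hd₂ : G.dist w₂ v = k) :
    w₁ = w₂ := by
  have huv : G.Reachable u v := Reachable.of_dist_ne_zero (h ▸ k.succ_ne_zero)
  obtain ⟨q₁, hq₁⟩ := (h₁.symm.reachable.trans huv).exists_walk_length_eq_dist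
  obtain ⟨q₂, hq₂⟩ := (h₂.symm.reachable.trans huv).exists_walk_length_eq_dist
  have hp₁ : (q₁.cons h₁).IsPath := Walk.isPath_of_length_eq_dist _ (by simp [hq₁, hd₁, h])
  have hp₂ : (q₂.cons h₂).IsPath := Walk.isPath_of_length_eq_dist _ (by simp [hq₂, hd₂, h])
  have := congrArg (fun p : G.Path u v ↦ (p : G.Walk u v).snd)
    ((hG.subsingleton_path u v).elim ⟨_, hp₁⟩ ⟨_, hp₂⟩)
  simpa using this

end SimpleGraph

section MatchesGraph

variable {α : Type*} {G : SimpleGraph α} {A : Matrix α α ℝ}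

lemma MatchesGraph.dist_le_dist_add_one (hAG : MatchesGraph A G) {u w : α} (h : A u w ≠ 0)
    (v : α) : G.dist u v ≤ G.dist w v + 1 := by
  by_cases huw : u = w
  · subst huw; omega
  rcases ((hAG u w huw).mp h).diff_dist_adj (u := v) with h' | h' | h' <;>
    rw [SimpleGraph.dist_comm, SimpleGraph.dist_comm (u := v)] at h' <;> omega

variable [Fintype α] [DecidableEq α]

lemma MatchesGraph.pow_apply_eq_zero_of_lt_dist (hAG : MatchesGraph A G) {k : ℕ} {u v : α}
    (h : k < G.dist u v) : (A ^ k) u v = 0 := by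
  induction k generalizing u with
  | zero =>
    have huv : u ≠ v := by rintro rfl; simp at h
    simp [one_apply, huv]
  | succ k ih =>
    rw [pow_succ', mul_apply]
    refine Finset.sum_eq_zero fun w _ ↦ ?_
    by_cases hw : A u w = 0
    · rw [hw, zero_mul]
    · rw [ih (by have := hAG.dist_le_dist_add_one hw v; omega), mul_zero]

lemma MatchesGraph.pow_apply_ne_zero_of_dist_eq (hG : G.IsAcyclic) (hAG : MatchesGraph A G)
    {k : ℕ} {u v : α} (huv : G.Reachable u v) (h : G.dist u v = k) : (A ^ k) u v ≠ 0 := by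
  induction k generalizing u with
  | zero =>
    obtain rfl : u = v := huv.dist_eq_zero_iff.mp h
    simp
  | succ k ih =>
    obtain ⟨w, hadj, hwv⟩ := SimpleGraph.exists_adj_dist_eq_of_dist_eq_add_one h
    rw [pow_succ', mul_apply, Finset.sum_eq_single w]
    · exact mul_ne_zero ((hAG u w hadj.ne).mpr hadj) (ih (hadj.symm.reachable.trans huv) hwv)
    · intro x _ hxw
      by_cases hx : A u x = 0
      · rw [hx, zero_mul]
      refine mul_eq_zero_of_right _ (hAG.pow_apply_eq_zero_of_lt_dist ?_)
      have hle := hAG.dist_le_dist_add_one hx v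
      refine lt_of_le_of_ne (by omega) fun hxv ↦ hxw ?_
      have hux : u ≠ x := by rintro rfl; omega
      exact hG.eq_of_adj_of_dist_eq h ((hAG u x hux).mp hx) hadj hxv.symm hwv
    · simp

lemma MatchesGraph.aeval_apply_eq_leadingCoeff_mul (hAG : MatchesGraph A G) (q : ℝ[X])
    {u v : α} (h : G.dist u v = q.natDegree) :
    aeval A q u v = q.leadingCoeff * (A ^ q.natDegree) u v := by
  have hlow : ∀ i ∈ Finset.range q.natDegree, (q.coeff i • A ^ i) u v = 0 := fun i hi ↦ by
    rw [Matrix.smul_apply, hAG.pow_apply_eq_zero_of_lt_dist (h ▸ Finset.mem_range.mp hi),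
      smul_zero]
  rw [aeval_eq_sum_range, Finset.sum_range_succ, Matrix.add_apply, Matrix.sum_apply,
    Finset.sum_eq_zero hlow, zero_add, Matrix.smul_apply, smul_eq_mul, leadingCoeff]

lemma MatchesGraph.add_one_le_natDegree_of_aeval_eq_zero (hG : G.IsAcyclic)
    (hAG : MatchesGraph A G) {q : ℝ[X]} (hq : q ≠ 0) (hAq : aeval A q = 0) {u v : α}
    {d : ℕ} (huv : G.dist u v = d) : d + 1 ≤ q.natDegree := by
  by_contra! hlt
  obtain ⟨w, hreach, hw⟩ := SimpleGraph.exists_dist_eq_of_le huv (j := q.natDegree) (by omega)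
  have hentry := hAG.aeval_apply_eq_leadingCoeff_mul q hw
  rw [hAq, Matrix.zero_apply] at hentry
  exact mul_ne_zero (leadingCoeff_ne_zero.mpr hq)
    (hAG.pow_apply_ne_zero_of_dist_eq hG hreach hw) hentry.symm

end MatchesGraph

lemma Matrix.IsHermitian.aeval_prod_distEig_eq_zero {α : Type*} [Fintype α] [DecidableEq α]
    {A : Matrix α α ℝ} (hA : A.IsHermitian) : aeval A (∏ μ ∈ distEig A, (X - C μ)) = 0 := by
  rw [← cfc_polynomial _ A hA.isSelfAdjoint, cfc_congr (g := 0), cfc_zero]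
  intro x hx
  rw [Matrix.mem_spectrum_iff_isRoot_charpoly] at hx
  simpa [distEig, eval_prod, Finset.prod_eq_zero_iff, sub_eq_zero, (charpoly_monic A).ne_zero]
    using hx

theorem stmt0 {n d : ℕ} (G : SimpleGraph (Fin n)) (hT : G.IsTree) (hd : HasDiamG G d)
    (A : Matrix (Fin n) (Fin n) ℝ) (hA : A.IsSymm) (hAG : MatchesGraph A G) :
    d + 1 ≤ (distEig A).card := by
  obtain ⟨⟨u, v, huv⟩, -⟩ := hd
  have hAq := (isHermitian_iff_isSymm.mpr hA).aeval_prod_distEig_eq_zero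
  simpa using hAG.add_one_le_natDegree_of_aeval_eq_zero hT.isAcyclic
    (monic_prod_of_monic _ _ fun μ _ ↦ monic_X_sub_C μ).ne_zero hAq huv
end

section
/- Let T be a tree and M a real symmetric matrix whose underlying graph is T. Then the smallest eigenvalue of M has multiplicity 1, and the largest eigenvalue of M has multiplicity 1. -/
open Matrix Polynomial

/-- The multiplicity of `lam` as an eigenvalue of `A` (root multiplicity in the
characteristic polynomial). -/
noncomputable def multEig {α : Type*} [Fintype α] [DecidableEq α]
    (A : Matrix α α ℝ) (lam : ℝ) : ℕ :=
  A.charpoly.rootMultiplicity lam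

/-!
If `μ` is the largest (smallest) eigenvalue of `M`, then `B = μ • 1 - M` (`B = M - μ • 1`) is
positive semidefinite and has the same off-diagonal support, the tree `T`. On a tree every edge
sign pattern is a coboundary, so there are signs `εᵢ = ±1` with `εᵢ εⱼ Bᵢⱼ ≤ 0` for `i ≠ j`.
For `x ∈ ker B` the vector `y = ε |x|` satisfies `yᵀ B y ≤ xᵀ B x = 0`, hence `y ∈ ker B`, and
row `j` of `B y = 0` at a vertex with `xⱼ = 0` is a sum of nonpositive terms, forcing `x` to vanish
at every neighbour of `j`. By connectedness a nonzero kernel vector has no zero entry, so for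
orthogonal kernel vectors `u, v` the kernel vector `vₖ u - uₖ v`, which vanishes at `k`, is zero:
`ker B` is at most one-dimensional.
-/

namespace SimpleGraph

variable {V α : Type*} [CommGroup α] {G : SimpleGraph V}

theorem IsTree.exists_potential (hG : G.IsTree) (σ : V → V → α)
    (hσ : ∀ i j, G.Adj i j → σ j i = (σ i j)⁻¹) :
    ∃ ε : V → α, ∀ i j, G.Adj i j → σ i j = (ε i)⁻¹ * ε j := by
  obtain ⟨r⟩ := hG.connected.nonempty
  choose P hP using fun v => (hG.existsUnique_path r v).exists
  have hconcat : ∀ {i j} (h : G.Adj i j) (p : G.Walk r i),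
      ((p.concat h).darts.map fun d => σ d.fst d.snd).prod =
        (p.darts.map fun d => σ d.fst d.snd).prod * σ i j := by
    intro i j h p
    simp [Walk.darts_concat]
  -- `ε v` is the product of `σ` along the unique path from the root `r` to `v`.
  refine ⟨fun v => ((P v).darts.map fun d => σ d.fst d.snd).prod, fun i j hij => ?_⟩
  dsimp only
  by_cases hi : i ∈ (P j).support
  · rw [hG.isAcyclic.path_concat (hP i) (hP j) hij hi, hconcat]
    group
  · have hj := hG.isAcyclic.mem_support_of_ne_mem_support_of_adj_of_isPath (hP i) (hP j) hij hi
    rw [hG.isAcyclic.path_concat (hP j) (hP i) hij.symm hj, hconcat, hσ i j hij]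
    group

end SimpleGraph

section

variable {ι : Type*} {G : SimpleGraph ι} {B : Matrix ι ι ℝ}

lemma MatchesGraph.sub_smul_one [DecidableEq ι] (h : MatchesGraph B G) (μ : ℝ) :
    MatchesGraph (B - μ • 1) G :=
  fun i j hij => by simpa [one_apply_ne hij] using h i j hij

lemma MatchesGraph.smul_one_sub [DecidableEq ι] (h : MatchesGraph B G) (μ : ℝ) :
    MatchesGraph (μ • 1 - B) G :=
  fun i j hij => by simpa [one_apply_ne hij] using h i j hij

lemma exists_signing_of_isTree (hG : G.IsTree) (hB : B.IsSymm) (hBG : MatchesGraph B G) :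
    ∃ ε : ι → ℝ, (∀ i, ε i * ε i = 1) ∧ ∀ i j, i ≠ j → ε i * ε j * B i j = -|B i j| := by
  obtain ⟨ε, hε⟩ := hG.exists_potential (fun i j => if 0 < B i j then (-1 : ℤˣ) else 1)
    fun i j _ => by rw [Int.units_inv_eq_self, hB.apply]
  refine ⟨fun i => ((ε i : ℤ) : ℝ), fun i => ?_, fun i j hij => ?_⟩
  · simp only [← Int.cast_mul, ← Units.val_mul, Int.units_mul_self, Units.val_one, Int.cast_one]
  by_cases hadj : G.Adj i j
  · have hσ := congrArg (fun u : ℤˣ => ((u : ℤ) : ℝ)) (hε i j hadj)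
    simp only [Int.units_inv_eq_self, Units.val_mul, Int.cast_mul] at hσ
    rw [← hσ]
    split_ifs with h
    · rw [abs_of_pos h]; simp
    · rw [abs_of_nonpos (not_lt.1 h)]; simp
  · have : B i j = 0 := not_not.1 fun h => hadj ((hBG i j hij).1 h)
    simp [this]

variable [Fintype ι] {ε : ι → ℝ}

lemma signedAbs_dotProduct_mulVec_le (hε : ∀ i, ε i * ε i = 1)
    (hεB : ∀ i j, i ≠ j → ε i * ε j * B i j = -|B i j|) (x : ι → ℝ) :
    (fun i => ε i * |x i|) ⬝ᵥ (B *ᵥ fun i => ε i * |x i|) ≤ x ⬝ᵥ (B *ᵥ x) := by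
  simp only [dotProduct, mulVec, Finset.mul_sum]
  refine Finset.sum_le_sum fun i _ => Finset.sum_le_sum fun j _ => ?_
  rcases eq_or_ne i j with rfl | hij
  · exact le_of_eq <| by
      linear_combination (B i i * |x i| * |x i|) * hε i + B i i * abs_mul_abs_self (x i)
  · calc ε i * |x i| * (B i j * (ε j * |x j|)) = -|x i * (B i j * x j)| := by
          rw [abs_mul, abs_mul]; linear_combination (|x i| * |x j|) * hεB i j hij
      _ ≤ x i * (B i j * x j) := neg_abs_le _

lemma apply_eq_zero_of_adj_of_mulVec_signedAbs_eq_zero (hBG : MatchesGraph B G)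
    (hεB : ∀ i j, i ≠ j → ε i * ε j * B i j = -|B i j|)
    {x : ι → ℝ} (hy : B *ᵥ (fun i => ε i * |x i|) = 0) {i j : ι} (hj : x j = 0)
    (hji : G.Adj j i) : x i = 0 := by
  have hterm : ∀ m, ε j * (B j m * (ε m * |x m|)) = -(|B j m| * |x m|) := by
    intro m
    rcases eq_or_ne j m with rfl | hjm
    · simp [hj]
    · linear_combination |x m| * hεB j m hjm
  have hrow : ∑ m, |B j m| * |x m| = 0 := by
    have := congrArg (ε j * ·) (congrFun hy j)
    simpa only [mulVec, dotProduct, Pi.zero_apply, mul_zero, Finset.mul_sum, hterm,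
      Finset.sum_neg_distrib, neg_eq_zero] using this
  have := (Finset.sum_eq_zero_iff_of_nonneg fun m _ => by positivity).1 hrow i (Finset.mem_univ _)
  simpa [(hBG j i hji.ne).2 hji] using this

theorem Matrix.PosSemidef.apply_ne_zero_of_mulVec_eq_zero (hB : B.PosSemidef) (hG : G.Connected)
    (hBG : MatchesGraph B G) (hε : ∀ i, ε i * ε i = 1)
    (hεB : ∀ i j, i ≠ j → ε i * ε j * B i j = -|B i j|) {x : ι → ℝ} (hx : B *ᵥ x = 0)
    (hx0 : x ≠ 0) (k : ι) : x k ≠ 0 := by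
  intro hk
  obtain ⟨l, hl⟩ := Function.ne_iff.mp hx0
  set y : ι → ℝ := fun i => ε i * |x i|
  have hy : B *ᵥ y = 0 := by
    refine (hB.dotProduct_mulVec_zero_iff y).1 (le_antisymm ?_ (hB.dotProduct_mulVec_nonneg y))
    simpa [hx] using signedAbs_dotProduct_mulVec_le hε hεB x
  obtain ⟨d, -, hd0, hd1⟩ :=
    (hG.preconnected k l).some.exists_boundary_dart {i | x i = 0} hk hl
  exact hd1 (apply_eq_zero_of_adj_of_mulVec_signedAbs_eq_zero hBG hεB hy hd0 d.adj)

theorem Matrix.PosSemidef.eq_zero_or_eq_zero_of_isTree (hB : B.PosSemidef) (hG : G.IsTree)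
    (hBG : MatchesGraph B G) {u v : ι → ℝ} (hu : B *ᵥ u = 0) (hv : B *ᵥ v = 0)
    (huv : u ⬝ᵥ v = 0) : u = 0 ∨ v = 0 := by
  obtain ⟨ε, hε, hεB⟩ :=
    exists_signing_of_isTree hG (isHermitian_iff_isSymm.1 hB.isHermitian) hBG
  have hnz {x : ι → ℝ} := hB.apply_ne_zero_of_mulVec_eq_zero hG.connected hBG hε hεB (x := x)
  by_contra! h
  obtain ⟨k⟩ := hG.connected.nonempty
  set w := v k • u - u k • v
  have hw : B *ᵥ w = 0 := by simp [w, mulVec_sub, mulVec_smul, hu, hv]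
  have hw0 : w = 0 := by
    by_contra hw0
    exact hnz hw hw0 k (by simp [w, mul_comm])
  have : v k * (u ⬝ᵥ u) = 0 := by
    simpa [w, dotProduct_sub, huv] using congrArg (u ⬝ᵥ ·) hw0
  rcases mul_eq_zero.1 this with h1 | h1
  · exact hnz hv h.2 k h1
  · exact h.1 (dotProduct_self_eq_zero.1 h1)

end

namespace Matrix.IsHermitian

open Finset
open scoped MatrixOrder

variable {ι : Type*} [Fintype ι] [DecidableEq ι] {A : Matrix ι ι ℝ} (hA : A.IsHermitian)
include hA

lemma mem_distEig_iff {μ : ℝ} : μ ∈ distEig A ↔ ∃ i, hA.eigenvalues i = μ := by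
  simp [distEig, hA.roots_charpoly_eq_eigenvalues]

lemma multEig_eq_card (μ : ℝ) : multEig A μ = #{i | hA.eigenvalues i = μ} := by
  rw [multEig, ← count_roots, hA.roots_charpoly_eq_eigenvalues, Multiset.count_map]
  simp only [eq_comm]
  rfl

lemma posSemidef_sub_smul_one {μ : ℝ} (h : ∀ i, μ ≤ hA.eigenvalues i) :
    (A - μ • 1).PosSemidef := by
  have := (algebraMap_le_iff_le_spectrum (r := μ) (a := A) hA.isSelfAdjoint).2 <| by
    rw [hA.spectrum_real_eq_range_eigenvalues]; rintro _ ⟨i, rfl⟩; exact h i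
  rwa [Matrix.le_iff, Algebra.algebraMap_eq_smul_one] at this

lemma posSemidef_smul_one_sub {μ : ℝ} (h : ∀ i, hA.eigenvalues i ≤ μ) :
    (μ • 1 - A).PosSemidef := by
  have := (le_algebraMap_iff_spectrum_le (r := μ) (a := A) hA.isSelfAdjoint).2 <| by
    rw [hA.spectrum_real_eq_range_eigenvalues]; rintro _ ⟨i, rfl⟩; exact h i
  rwa [Matrix.le_iff, Algebra.algebraMap_eq_smul_one] at this

lemma multEig_eq_one {μ : ℝ} (hμ : μ ∈ distEig A)
    (h : ∀ u v : ι → ℝ, A *ᵥ u = μ • u → A *ᵥ v = μ • v → u ⬝ᵥ v = 0 → u = 0 ∨ v = 0) :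
    multEig A μ = 1 := by
  obtain ⟨i, rfl⟩ := hA.mem_distEig_iff.1 hμ
  rw [hA.multEig_eq_card, Finset.card_eq_one]
  refine ⟨i, Finset.eq_singleton_iff_unique_mem.2 ⟨by simp, fun j hj => ?_⟩⟩
  rw [Finset.mem_filter] at hj
  by_contra hji
  have hb := hA.eigenvectorBasis.orthonormal
  have hdot : ⇑(hA.eigenvectorBasis j) ⬝ᵥ ⇑(hA.eigenvectorBasis i) = 0 := by
    have := orthonormal_iff_ite.1 hb i j
    rw [EuclideanSpace.inner_eq_star_dotProduct] at this
    simpa [Ne.symm hji] using this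
  rcases h _ _ (hj.2 ▸ hA.mulVec_eigenvectorBasis j) (hA.mulVec_eigenvectorBasis i) hdot
    with h0 | h0
  · exact hb.ne_zero j (by simpa using h0)
  · exact hb.ne_zero i (by simpa using h0)

end Matrix.IsHermitian

theorem stmt1 {n : ℕ} (G : SimpleGraph (Fin n)) (hT : G.IsTree)
    (M : Matrix (Fin n) (Fin n) ℝ) (hM : M.IsSymm) (hMG : MatchesGraph M G) :
    (∀ lam ∈ distEig M, (∀ mu ∈ distEig M, lam ≤ mu) → multEig M lam = 1) ∧
    (∀ lam ∈ distEig M, (∀ mu ∈ distEig M, mu ≤ lam) → multEig M lam = 1) := by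
  have hA : M.IsHermitian := isHermitian_iff_isSymm.2 hM
  have hev (i) : hA.eigenvalues i ∈ distEig M := hA.mem_distEig_iff.2 ⟨i, rfl⟩
  constructor
  · intro μ hμ hmin
    refine hA.multEig_eq_one hμ fun u v hu hv huv => ?_
    refine (hA.posSemidef_sub_smul_one fun i => hmin _ (hev i)).eq_zero_or_eq_zero_of_isTree hT
      (hMG.sub_smul_one μ) ?_ ?_ huv <;> simp [sub_mulVec, smul_mulVec, hu, hv]
  · intro μ hμ hmax
    refine hA.multEig_eq_one hμ fun u v hu hv huv => ?_
    refine (hA.posSemidef_smul_one_sub fun i => hmax _ (hev i)).eq_zero_or_eq_zero_of_isTree hT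
      (hMG.smul_one_sub μ) ?_ ?_ huv <;> simp [sub_mulVec, smul_mulVec, hu, hv]
end

section
/- Let T_0,...,T_p (p ≥ 1) be disjoint rooted trees with roots v_0,...,v_p, and let T = T_0 ⊙ (T_1,...,T_p) be the tree obtained by adding edges v_0v_i for i = 1,...,p. Let M be a real symmetric matrix with underlying graph T such that each principal submatrix M[T_i] equals a given symmetric matrix M_i with underlying graph T_i, and each entry M_{v_0 v_i} = δ for a nonzero real δ. Then every eigenvalue λ of any M_ℓ (0 ≤ ℓ ≤ p) satisfies λ_min(M) < λ < λ_max(M). -/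
/-!
Extending an eigenvector of `Ms ℓ` by zero gives a vector with Rayleigh quotient `lam`, so
`lam ≤ λ_max`. If equality held, this extension would be a top eigenvector of the whole matrix.
Because the whole graph is a tree, a `±1` diagonal similarity makes every off-diagonal entry
nonnegative; then, as in Perron–Frobenius theory, the absolute value of a top eigenvector is again
a top eigenvector, and its zeros propagate along the edges of the connected graph. The extension
vanishes on the other blocks, hence everywhere, a contradiction. The lower bound follows by
negating all the data.
-/

open Matrix Polynomial

/-- The matrix of the tree `T₀ ⊙ (T₁,…,T_p)`: diagonal blocks `Ms i`, and connecting
entries `δ` between the root `r 0` of `T₀` and the roots `r i` of the other trees. -/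
noncomputable def odotMat {p : ℕ} {V : Fin (p + 1) → Type} [∀ i, DecidableEq (V i)]
    (Ms : ∀ i, Matrix (V i) (V i) ℝ) (r : ∀ i, V i) (δ : ℝ) :
    Matrix (Σ i, V i) (Σ i, V i) ℝ := fun a b =>
  if h : a.1 = b.1 then Ms b.1 (h ▸ a.2) b.2
  else if a = ⟨0, r 0⟩ ∧ b.2 = r b.1 then δ
  else if b = ⟨0, r 0⟩ ∧ a.2 = r a.1 then δ
  else 0

/-- `y` is the smallest eigenvalue of `A`. -/
def IsLamMin {α : Type*} [Fintype α] [DecidableEq α] (A : Matrix α α ℝ) (y : ℝ) : Prop :=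
  A.charpoly.IsRoot y ∧ ∀ z, A.charpoly.IsRoot z → y ≤ z

/-- `y` is the largest eigenvalue of `A`. -/
def IsLamMax {α : Type*} [Fintype α] [DecidableEq α] (A : Matrix α α ℝ) (y : ℝ) : Prop :=
  A.charpoly.IsRoot y ∧ ∀ z, A.charpoly.IsRoot z → z ≤ y

namespace Matrix

variable {n : Type*}

section

variable [Fintype n] [DecidableEq n]

theorem exists_mulVec_eq_smul_of_isRoot_charpoly {K : Type*} [Field K] {A : Matrix n n K} {μ : K}
    (h : A.charpoly.IsRoot μ) : ∃ v ≠ 0, A *ᵥ v = μ • v := by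
  rw [← mem_spectrum_iff_isRoot_charpoly, ← spectrum_toLin',
    ← Module.End.hasEigenvalue_iff_mem_spectrum] at h
  obtain ⟨v, hv⟩ := h.exists_hasEigenvector
  exact ⟨v, hv.2, by simpa using hv.apply_eq_smul⟩

theorem isRoot_charpoly_neg_iff (A : Matrix n n ℝ) (z : ℝ) :
    (-A).charpoly.IsRoot z ↔ A.charpoly.IsRoot (-z) := by
  rw [← mem_spectrum_iff_isRoot_charpoly, ← mem_spectrum_iff_isRoot_charpoly,
    ← spectrum.neg_eq, Set.mem_neg]

theorem isLamMin_iff_isLamMax_neg {A : Matrix n n ℝ} {a : ℝ} :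
    IsLamMin A a ↔ IsLamMax (-A) (-a) := by
  simp only [IsLamMin, IsLamMax, isRoot_charpoly_neg_iff, neg_neg]
  refine and_congr_right fun _ => ⟨fun h z hz => ?_, fun h z hz => ?_⟩
  · linarith [h _ hz]
  · simpa using h (-z) (by rwa [neg_neg])

variable {A : Matrix n n ℝ} {b : ℝ}

theorem IsHermitian.exists_isLamMax [Nonempty n] (hA : A.IsHermitian) : ∃ b, IsLamMax A b := by
  obtain ⟨i, -, hi⟩ := Finset.univ.exists_max_image hA.eigenvalues Finset.univ_nonempty
  simp only [IsLamMax, ← mem_spectrum_iff_isRoot_charpoly, hA.spectrum_real_eq_range_eigenvalues,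
    Set.forall_mem_range]
  exact ⟨_, ⟨i, rfl⟩, fun j => hi j (Finset.mem_univ j)⟩

open scoped MatrixOrder in
theorem IsHermitian.posSemidef_algebraMap_sub (hA : A.IsHermitian)
    (hb : ∀ z, A.charpoly.IsRoot z → z ≤ b) : (algebraMap ℝ _ b - A).PosSemidef := by
  rw [← Matrix.le_iff, le_algebraMap_iff_spectrum_le hA.isSelfAdjoint]
  exact fun z hz => hb z (mem_spectrum_iff_isRoot_charpoly.1 hz)

theorem algebraMap_sub_mulVec (b : ℝ) (A : Matrix n n ℝ) (x : n → ℝ) :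
    (algebraMap ℝ _ b - A) *ᵥ x = b • x - A *ᵥ x := by
  rw [sub_mulVec, Algebra.algebraMap_eq_smul_one, smul_mulVec, one_mulVec]

theorem IsHermitian.dotProduct_mulVec_le (hA : A.IsHermitian)
    (hb : ∀ z, A.charpoly.IsRoot z → z ≤ b) (x : n → ℝ) : x ⬝ᵥ A *ᵥ x ≤ b * (x ⬝ᵥ x) := by
  have := (hA.posSemidef_algebraMap_sub hb).dotProduct_mulVec_nonneg x
  rw [star_trivial, algebraMap_sub_mulVec, dotProduct_sub, dotProduct_smul, smul_eq_mul] at this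
  linarith

theorem IsHermitian.mulVec_eq_smul_of_dotProduct_mulVec_eq (hA : A.IsHermitian)
    (hb : ∀ z, A.charpoly.IsRoot z → z ≤ b) {x : n → ℝ} (h : x ⬝ᵥ A *ᵥ x = b * (x ⬝ᵥ x)) :
    A *ᵥ x = b • x := by
  have := (hA.posSemidef_algebraMap_sub hb).dotProduct_mulVec_zero_iff x
  rw [star_trivial, algebraMap_sub_mulVec, dotProduct_sub, dotProduct_smul, smul_eq_mul, h,
    sub_self, sub_eq_zero] at this
  exact (this.1 rfl).symm

end

variable {A : Matrix n n ℝ} {b : ℝ}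

/-- Conjugating `A` by `diagonal d` makes all off-diagonal entries nonnegative. -/
def IsNonnegSigning (A : Matrix n n ℝ) (d : n → ℝ) : Prop :=
  (∀ i, |d i| = 1) ∧ ∀ i j, i ≠ j → 0 ≤ d i * d j * A i j

def underlyingGraph (A : Matrix n n ℝ) : SimpleGraph n :=
  SimpleGraph.fromRel fun i j => A i j ≠ 0

theorem IsNonnegSigning.mul_self_eq_one {d : n → ℝ} (hd : A.IsNonnegSigning d) (i : n) :
    d i * d i = 1 := by
  rw [← abs_mul_abs_self, hd.1, one_mul]

theorem dotProduct_mulVec_eq_sum [Fintype n] (x y : n → ℝ) :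
    x ⬝ᵥ A *ᵥ y = ∑ i, ∑ j, x i * (A i j * y j) := by
  simp only [dotProduct, mulVec, Finset.mul_sum]

variable [Fintype n] [DecidableEq n]

/-- Replacing `w` by `d * |w|` does not decrease the Rayleigh quotient. -/
theorem IsHermitian.mulVec_sign_mul_abs_eq_smul (hA : A.IsHermitian)
    (hb : ∀ z, A.charpoly.IsRoot z → z ≤ b) {d : n → ℝ} (hd : A.IsNonnegSigning d)
    {w : n → ℝ} (hw : A *ᵥ w = b • w) :
    A *ᵥ (fun i => d i * |w i|) = b • fun i => d i * |w i| := by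
  set z : n → ℝ := fun i => d i * |w i|
  have hzz : ∀ i, z i * z i = w i * w i := fun i => by
    simp only [z]
    rw [mul_mul_mul_comm, hd.mul_self_eq_one, one_mul, abs_mul_abs_self]
  have hterm : ∀ i j, w i * (A i j * w j) ≤ z i * (A i j * z j) := by
    intro i j
    rcases eq_or_ne i j with rfl | hij
    · rw [mul_left_comm, mul_left_comm (z i), hzz]
    · have hdd : (d i * d j) * (d i * d j) = 1 := by
        rw [mul_mul_mul_comm, hd.mul_self_eq_one, hd.mul_self_eq_one, one_mul]
      calc w i * (A i j * w j) = (d i * d j * A i j) * (d i * d j * (w i * w j)) := by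
            linear_combination (-(A i j * w i * w j)) * hdd
        _ ≤ (d i * d j * A i j) * |d i * d j * (w i * w j)| :=
            mul_le_mul_of_nonneg_left (le_abs_self _) (hd.2 i j hij)
        _ = z i * (A i j * z j) := by
            simp only [z, abs_mul, hd.1, one_mul]
            ring
  refine hA.mulVec_eq_smul_of_dotProduct_mulVec_eq hb
    (le_antisymm (hA.dotProduct_mulVec_le hb z) ?_)
  calc b * (z ⬝ᵥ z) = w ⬝ᵥ A *ᵥ w := by
        rw [hw, dotProduct_smul, smul_eq_mul, dotProduct, dotProduct]
        simp only [hzz]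
    _ ≤ z ⬝ᵥ A *ᵥ z := by
        simp only [dotProduct_mulVec_eq_sum]
        exact Finset.sum_le_sum fun i _ => Finset.sum_le_sum fun j _ => hterm i j

theorem IsHermitian.apply_eq_zero_of_apply_eq_zero (hA : A.IsHermitian)
    (hb : ∀ z, A.charpoly.IsRoot z → z ≤ b) {d : n → ℝ} (hd : A.IsNonnegSigning d)
    {w : n → ℝ} (hw : A *ᵥ w = b • w) {i j : n} (hij : A i j ≠ 0) (hi : w i = 0) : w j = 0 := by
  have hrow : ∑ k, d i * d k * A i k * |w k| = 0 := by
    have := congrFun (hA.mulVec_sign_mul_abs_eq_smul hb hd hw) i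
    simp only [mulVec, dotProduct, Pi.smul_apply, smul_eq_mul, hi, abs_zero, mul_zero] at this
    rw [← mul_zero (d i), ← this, Finset.mul_sum]
    exact Finset.sum_congr rfl fun k _ => by ring
  have hnonneg : ∀ k ∈ Finset.univ, 0 ≤ d i * d k * A i k * |w k| := fun k _ => by
    rcases eq_or_ne i k with rfl | hik
    · rw [hi, abs_zero, mul_zero]
    · exact mul_nonneg (hd.2 i k hik) (abs_nonneg _)
  have hd0 : ∀ k, d k ≠ 0 := fun k h => by simpa [h] using hd.1 k
  have := (Finset.sum_eq_zero_iff_of_nonneg hnonneg).1 hrow j (Finset.mem_univ j)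
  simpa [hd0, hij] using this

theorem IsHermitian.eq_zero_of_apply_eq_zero (hA : A.IsHermitian)
    (hb : ∀ z, A.charpoly.IsRoot z → z ≤ b) {d : n → ℝ} (hd : A.IsNonnegSigning d)
    (hconn : A.underlyingGraph.Preconnected) {w : n → ℝ} (hw : A *ᵥ w = b • w) {i : n}
    (hi : w i = 0) : w = 0 := by
  funext j
  induction (SimpleGraph.reachable_iff_reflTransGen i j).1 (hconn i j) with
  | refl => exact hi
  | tail _ hadj ih =>
    obtain ⟨-, h | h⟩ := hadj
    · exact hA.apply_eq_zero_of_apply_eq_zero hb hd hw h ih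
    · refine hA.apply_eq_zero_of_apply_eq_zero hb hd hw ?_ ih
      rwa [← hA.apply, star_trivial]

end Matrix

/-- Unlike `SignType.sign`, this never vanishes. -/
noncomputable def unitSign (x : ℝ) : ℝ := if 0 ≤ x then 1 else -1

theorem abs_unitSign (x : ℝ) : |unitSign x| = 1 := by
  unfold unitSign; split_ifs <;> simp

theorem unitSign_mul_self (x : ℝ) : unitSign x * x = |x| := by
  unfold unitSign; split_ifs with h
  · rw [one_mul, abs_of_nonneg h]
  · rw [abs_of_neg (not_le.1 h)]; ring

open SimpleGraph in
theorem SimpleGraph.IsTree.exists_isNonnegSigning {α : Type*} {G : SimpleGraph α} (hG : G.IsTree)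
    {A : Matrix α α ℝ} (hA : A.IsSymm) (hm : MatchesGraph A G) (r : α) :
    ∃ d : α → ℝ, d r = 1 ∧ A.IsNonnegSigning d := by
  choose P hP hPu using hG.existsUnique_path r
  set d : α → ℝ := fun v => ((P v).darts.map fun e => unitSign (A e.fst e.snd)).prod
  have hconcat : ∀ u v (h : G.Adj u v), P v = (P u).concat h → d v = d u * unitSign (A u v) := by
    intro u v h he
    simp only [d]
    rw [he, Walk.darts_concat, List.concat_eq_append, List.map_append, List.prod_append]
    simp
  -- The paths from `r` to two adjacent vertices differ by the edge joining them.
  have hstep : ∀ u v (h : G.Adj u v),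
      d v = d u * unitSign (A u v) ∨ d u = d v * unitSign (A v u) := by
    intro u v h
    by_cases hu : u ∈ (P v).support
    · exact .inl (hconcat u v h (hG.isAcyclic.path_concat (hP u) (hP v) h hu))
    · have hv := hG.isAcyclic.mem_support_of_ne_mem_support_of_adj_of_isPath (hP u) (hP v) h hu
      exact .inr (hconcat v u h.symm (hG.isAcyclic.path_concat (hP v) (hP u) h.symm hv))
  have habs : ∀ v, |d v| = 1 := fun v =>
    List.prod_induction (|·| = 1) (fun a b ha hb => by rw [abs_mul, ha, hb, one_mul]) abs_one
      (by simp [abs_unitSign])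
  have hsq : ∀ v, d v * d v = 1 := fun v => by rw [← abs_mul_abs_self, habs, one_mul]
  have hroot : d r = 1 := by
    simp [d, ← hPu r Walk.nil Walk.IsPath.nil]
  refine ⟨d, hroot, habs, fun u v huv => ?_⟩
  by_cases h : G.Adj u v
  · rcases hstep u v h with e | e <;> rw [e]
    · calc 0 ≤ |A u v| := abs_nonneg _
        _ = d u * (d u * unitSign (A u v)) * A u v := by
          rw [← unitSign_mul_self, ← mul_assoc, hsq, one_mul]
    · calc 0 ≤ |A v u| := abs_nonneg _
        _ = d v * unitSign (A v u) * d v * A u v := by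
          rw [← unitSign_mul_self, ← hA.apply u v, mul_right_comm (d v), hsq, one_mul]
  · rw [show A u v = 0 from not_not.1 (mt (hm u v huv).1 h), mul_zero]

section Extend

open Function

variable {m n R : Type*} [Fintype m] [Fintype n] [NonUnitalNonAssocSemiring R] {f : m → n}

theorem Function.Injective.sum_apply_extend_zero (hf : Injective f) {F : n → R → R}
    (hF : ∀ a, F a 0 = 0) (x : m → R) : ∑ a, F a (extend f x 0 a) = ∑ i, F (f i) (x i) := by
  classical
  rw [← Finset.sum_subset (Finset.subset_univ (Finset.univ.image f)), Finset.sum_image]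
  · simp [hf.extend_apply]
  · exact fun i _ j _ h => hf h
  · intro a _ ha
    rw [extend_apply' _ _ _ (by simpa using ha), Pi.zero_apply, hF]

theorem Function.Injective.dotProduct_extend_zero (hf : Injective f) (x y : m → R) :
    extend f x 0 ⬝ᵥ extend f y 0 = x ⬝ᵥ y := by
  rw [dotProduct,
    hf.sum_apply_extend_zero (F := fun a u => u * extend f y 0 a) (fun _ => zero_mul _)]
  simp [dotProduct, hf.extend_apply]

theorem Function.Injective.mulVec_extend_zero_apply (hf : Injective f) (A : Matrix n n R)
    (x : m → R) (i : m) : (A *ᵥ extend f x 0) (f i) = (A.submatrix f f *ᵥ x) i := by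
  rw [Matrix.mulVec, dotProduct, hf.sum_apply_extend_zero (fun _ => mul_zero _)]
  rfl

theorem Function.Injective.dotProduct_mulVec_extend_zero (hf : Injective f) (A : Matrix n n R)
    (x : m → R) : extend f x 0 ⬝ᵥ A *ᵥ extend f x 0 = x ⬝ᵥ A.submatrix f f *ᵥ x := by
  rw [dotProduct, hf.sum_apply_extend_zero (F := fun a u => u * (A *ᵥ extend f x 0) a)
    (fun _ => zero_mul _)]
  simp only [hf.mulVec_extend_zero_apply]
  rfl

end Extend

theorem MatchesGraph.neg {α : Type*} {A : Matrix α α ℝ} {G : SimpleGraph α}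
    (h : MatchesGraph A G) : MatchesGraph (-A) G := fun i j hij => by
  rw [Matrix.neg_apply, neg_ne_zero]
  exact h i j hij

section Odot

variable {p : ℕ} {V : Fin (p + 1) → Type} [∀ i, DecidableEq (V i)]
  (Ms : ∀ i, Matrix (V i) (V i) ℝ) (r : ∀ i, V i) (δ : ℝ)

@[simp]
theorem odotMat_apply_same (i : Fin (p + 1)) (u v : V i) :
    odotMat Ms r δ ⟨i, u⟩ ⟨i, v⟩ = Ms i u v := by
  simp [odotMat]

theorem odotMat_submatrix (i : Fin (p + 1)) :
    (odotMat Ms r δ).submatrix (Sigma.mk i) (Sigma.mk i) = Ms i := by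
  ext u v
  simp

theorem odotMat_root_root {j : Fin (p + 1)} (hj : j ≠ 0) :
    odotMat Ms r δ ⟨0, r 0⟩ ⟨j, r j⟩ = δ := by
  simp [odotMat, hj.symm]

theorem odotMat_neg : odotMat (fun i => -Ms i) r (-δ) = -odotMat Ms r δ := by
  ext a b
  simp only [odotMat, Matrix.neg_apply]
  split_ifs <;> simp

variable {Ms}

theorem odotMat_isSymm (hsym : ∀ i, (Ms i).IsSymm) : (odotMat Ms r δ).IsSymm := by
  refine Matrix.IsSymm.ext fun ⟨i, u⟩ ⟨j, v⟩ => ?_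
  rcases eq_or_ne i j with rfl | hij
  · simpa using (hsym i).apply u v
  · simp only [odotMat, dif_neg hij, dif_neg hij.symm]
    split_ifs <;> tauto

theorem odotMat_underlyingGraph_preconnected {G : ∀ i, SimpleGraph (V i)}
    (hconn : ∀ i, (G i).Preconnected) (hmatch : ∀ i, MatchesGraph (Ms i) (G i)) {δ : ℝ}
    (hδ : δ ≠ 0) : (odotMat Ms r δ).underlyingGraph.Preconnected := by
  let blockHom (i) : G i →g (odotMat Ms r δ).underlyingGraph :=
    ⟨Sigma.mk i, fun {u v} h =>
      ⟨by simpa using h.ne, .inl (by simpa using (hmatch i u v h.ne).2 h)⟩⟩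
  have hroot : ∀ a, (odotMat Ms r δ).underlyingGraph.Reachable ⟨0, r 0⟩ a := by
    rintro ⟨j, v⟩
    have hrr : (odotMat Ms r δ).underlyingGraph.Reachable ⟨0, r 0⟩ ⟨j, r j⟩ := by
      rcases eq_or_ne j 0 with rfl | hj
      · rfl
      · refine SimpleGraph.Adj.reachable ⟨by simp [hj.symm], .inl ?_⟩
        simpa [odotMat_root_root _ _ _ hj] using hδ
    exact hrr.trans ((hconn j (r j) v).map (blockHom j))
  exact fun a c => (hroot a).symm.trans (hroot c)

/-- Sign each block by a tree signing normalised at its root, then flip the blocks `1, …, p`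
by the sign of `δ`. -/
theorem exists_isNonnegSigning_odotMat {G : ∀ i, SimpleGraph (V i)} (hT : ∀ i, (G i).IsTree)
    (hsym : ∀ i, (Ms i).IsSymm) (hmatch : ∀ i, MatchesGraph (Ms i) (G i)) :
    ∃ D, (odotMat Ms r δ).IsNonnegSigning D := by
  choose d hdr hd using fun i => (hT i).exists_isNonnegSigning (hsym i) (hmatch i) (r i)
  let s (i : Fin (p + 1)) : ℝ := if i = 0 then 1 else unitSign δ
  have hs : ∀ i, |s i| = 1 := fun i => by
    simp only [s]; split_ifs <;> simp [abs_unitSign]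
  have hss : ∀ i, s i * s i = 1 := fun i => by rw [← abs_mul_abs_self, hs, one_mul]
  refine ⟨fun a => s a.1 * d a.1 a.2, fun a => by rw [abs_mul, hs, (hd _).1, one_mul], ?_⟩
  rintro ⟨i, u⟩ ⟨j, v⟩ hne
  rcases eq_or_ne i j with rfl | hij
  · have huv : u ≠ v := fun h => hne (h ▸ rfl)
    calc 0 ≤ (s i * s i) * (d i u * d i v * Ms i u v) := by
          rw [hss, one_mul]; exact (hd i).2 u v huv
      _ = _ := by simp only [odotMat_apply_same]; ring
  · simp only [odotMat, dif_neg hij]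
    split_ifs with h1 h2
    · obtain ⟨h, rfl⟩ := h1
      cases h
      simp [s, hdr, hij.symm, unitSign_mul_self]
    · obtain ⟨h, rfl⟩ := h2
      cases h
      simp [s, hdr, hij, unitSign_mul_self]
    · rw [mul_zero]

end Odot

theorem lt_of_isLamMax_odotMat {p : ℕ} (hp : 1 ≤ p) {V : Fin (p + 1) → Type}
    [∀ i, Fintype (V i)] [∀ i, DecidableEq (V i)] {G : ∀ i, SimpleGraph (V i)}
    (hT : ∀ i, (G i).IsTree) (r : ∀ i, V i) {Ms : ∀ i, Matrix (V i) (V i) ℝ}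
    (hsym : ∀ i, (Ms i).IsSymm) (hmatch : ∀ i, MatchesGraph (Ms i) (G i)) {δ : ℝ} (hδ : δ ≠ 0)
    {ℓ : Fin (p + 1)} {lam b : ℝ} (hlam : (Ms ℓ).charpoly.IsRoot lam)
    (hb : IsLamMax (odotMat Ms r δ) b) : lam < b := by
  set M := odotMat Ms r δ
  have hM : M.IsHermitian := Matrix.isHermitian_iff_isSymm.2 (odotMat_isSymm r δ hsym)
  have hinj : Function.Injective (Sigma.mk ℓ : V ℓ → Σ i, V i) := sigma_mk_injective
  obtain ⟨x, hx0, hx⟩ := Matrix.exists_mulVec_eq_smul_of_isRoot_charpoly hlam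
  set w := Function.extend (Sigma.mk ℓ) x 0
  have hquad : w ⬝ᵥ M *ᵥ w = lam * (w ⬝ᵥ w) := by
    rw [hinj.dotProduct_mulVec_extend_zero, odotMat_submatrix, hx, dotProduct_smul, smul_eq_mul,
      hinj.dotProduct_extend_zero]
  have hpos : 0 < w ⬝ᵥ w := by
    rw [hinj.dotProduct_extend_zero]
    exact lt_of_le_of_ne (Finset.sum_nonneg fun i _ => mul_self_nonneg _)
      (Ne.symm (mt dotProduct_self_eq_zero.1 hx0))
  have hle : lam ≤ b := le_of_mul_le_mul_right (hquad ▸ hM.dotProduct_mulVec_le hb.2 w) hpos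
  refine hle.lt_of_ne fun hlam_eq => hx0 ?_
  subst hlam_eq
  have hw : M *ᵥ w = lam • w := hM.mulVec_eq_smul_of_dotProduct_mulVec_eq hb.2 hquad
  obtain ⟨D, hD⟩ := exists_isNonnegSigning_odotMat r δ hT hsym hmatch
  have : Nontrivial (Fin (p + 1)) := Fin.nontrivial_iff_two_le.2 (by omega)
  obtain ⟨j, hj⟩ := exists_ne ℓ
  have hwj : w ⟨j, r j⟩ = 0 :=
    Function.extend_apply' _ _ _ fun ⟨u, hu⟩ => hj (congrArg Sigma.fst hu).symm
  have hw0 := hM.eq_zero_of_apply_eq_zero hb.2 hD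
    (odotMat_underlyingGraph_preconnected r (fun i => (hT i).connected.preconnected) hmatch hδ)
    hw hwj
  funext u
  simpa [w, hinj.extend_apply] using congrFun hw0 ⟨ℓ, u⟩

/-- Every eigenvalue of one of the blocks `Ms ℓ` lies strictly between the smallest
and the largest eigenvalue of the combined matrix. -/
theorem stmt5 {p : ℕ} (hp : 1 ≤ p) {V : Fin (p + 1) → Type} [∀ i, Fintype (V i)]
    [∀ i, DecidableEq (V i)] (G : ∀ i, SimpleGraph (V i)) (hT : ∀ i, (G i).IsTree)
    (r : ∀ i, V i) (Ms : ∀ i, Matrix (V i) (V i) ℝ) (hsym : ∀ i, (Ms i).IsSymm)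
    (hmatch : ∀ i, MatchesGraph (Ms i) (G i)) (δ : ℝ) (hδ : δ ≠ 0)
    (ℓ : Fin (p + 1)) (lam : ℝ) (hlam : ((Ms ℓ).charpoly).IsRoot lam) :
    ∃ a b : ℝ, IsLamMin (odotMat Ms r δ) a ∧ IsLamMax (odotMat Ms r δ) b ∧
      a < lam ∧ lam < b := by
  have hM : (odotMat Ms r δ).IsHermitian :=
    Matrix.isHermitian_iff_isSymm.2 (odotMat_isSymm r δ hsym)
  have : Nonempty (Σ i, V i) := ⟨⟨0, r 0⟩⟩
  obtain ⟨b, hb⟩ := hM.exists_isLamMax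
  obtain ⟨a, ha⟩ := hM.neg.exists_isLamMax
  have hupper := lt_of_isLamMax_odotMat hp hT r hsym hmatch hδ hlam hb
  -- The lower bound is the upper bound for the negated data `-Ms i`, `-δ`.
  have hlower := lt_of_isLamMax_odotMat hp hT r (fun i => (hsym i).neg) (fun i => (hmatch i).neg)
    (neg_ne_zero.2 hδ) (lam := -lam) (by rwa [Matrix.isRoot_charpoly_neg_iff, neg_neg])
    (by rwa [odotMat_neg])
  exact ⟨-a, b, Matrix.isLamMin_iff_isLamMax_neg.2 (by rwa [neg_neg]), hb, by linarith, hupper⟩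
end

section
/- With T = T_0 ⊙ (T_1,...,T_p) and M as above (M[T_i] = M_i, off-diagonal connecting entries equal to δ), for any real y strictly greater than every eigenvalue of every M_ℓ (0 ≤ ℓ ≤ p), there exists δ = δ(y) > 0 such that λ_max(M) = y. -/
open Matrix Polynomial

/-
The largest eigenvalue `g δ` of `M_δ` is a continuous function of `δ`: by Weyl's inequality
`λ_max(A + B) ≤ λ_max(A) + λ_max(B)` it is `1`-Lipschitz for the `ℓ∞` operator norm, and
`M_δ` is affine in `δ`. At `δ = 0` the matrix is block diagonal, so `g 0 < y`; the Rayleigh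
quotient at `e_{v₀} + e_{v₁}` shows `g δ ≥ δ + (M₀[v₀,v₀] + M₁[v₁,v₁]) / 2`, so `g` exceeds
`y` for large `δ`. The intermediate value theorem gives `δ > 0` with `g δ = y`.
-/

namespace Matrix

variable {n : Type*} [Fintype n] [DecidableEq n]

theorem isRoot_charpoly_iff_exists_mulVec_eq_smul {K : Type*} [Field K] (A : Matrix n n K)
    (μ : K) : A.charpoly.IsRoot μ ↔ ∃ v ≠ 0, A *ᵥ v = μ • v := by
  rw [← charpoly_toLin', ← Module.End.hasEigenvalue_iff_isRoot_charpoly,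
    Module.End.hasEigenvalue_iff, Submodule.ne_bot_iff]
  simp only [Module.End.mem_eigenspace_iff, toLin'_apply]
  exact exists_congr fun v => and_comm

theorem IsHermitian.isRoot_charpoly_eigenvalues {A : Matrix n n ℝ} (hA : A.IsHermitian) (i : n) :
    A.charpoly.IsRoot (hA.eigenvalues i) :=
  (isRoot_charpoly_iff_exists_mulVec_eq_smul A _).2
    ⟨_, by simpa using hA.eigenvectorBasis.orthonormal.ne_zero i, hA.mulVec_eigenvectorBasis i⟩

/-- Junk value `0` when the characteristic polynomial has no real root. -/
noncomputable def lamMax (A : Matrix n n ℝ) : ℝ :=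
  sSup {μ | A.charpoly.IsRoot μ}

theorem IsHermitian.isLamMax_lamMax [Nonempty n] {A : Matrix n n ℝ} (hA : A.IsHermitian) :
    IsLamMax A A.lamMax := by
  have hfin : {μ | A.charpoly.IsRoot μ}.Finite :=
    Polynomial.finite_setOfPred_isRoot (charpoly_monic A).ne_zero
  have hne : {μ | A.charpoly.IsRoot μ}.Nonempty :=
    ⟨_, hA.isRoot_charpoly_eigenvalues (Classical.arbitrary n)⟩
  exact ⟨hne.csSup_mem hfin, fun z hz => le_csSup hfin.bddAbove hz⟩

theorem IsHermitian.dotProduct_mulVec_le_s6 {A : Matrix n n ℝ} (hA : A.IsHermitian) {μ : ℝ}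
    (hμ : ∀ i, hA.eigenvalues i ≤ μ) (x : n → ℝ) : x ⬝ᵥ (A *ᵥ x) ≤ μ * (x ⬝ᵥ x) := by
  set U : Matrix n n ℝ := (hA.eigenvectorUnitary : Matrix n n ℝ)
  have hUU : U * Uᵀ = 1 := by
    rw [← conjTranspose_eq_transpose_of_trivial]
    exact mem_unitaryGroup_iff.mp hA.eigenvectorUnitary.2
  have hAU : A = U * diagonal hA.eigenvalues * Uᵀ := by
    conv_lhs => rw [hA.spectral_theorem, Unitary.conjStarAlgAut_apply]
    simp [U, star_eq_conjTranspose, RCLike.ofReal_real_eq_id]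
  set w := Uᵀ *ᵥ x
  have hAx : x ⬝ᵥ (A *ᵥ x) = w ⬝ᵥ (diagonal hA.eigenvalues *ᵥ w) := by
    conv_lhs => rw [hAU]
    rw [← mulVec_mulVec, ← mulVec_mulVec, dotProduct_mulVec x U, ← mulVec_transpose,
      dotProduct_mulVec w]
  have hw : w ⬝ᵥ w = x ⬝ᵥ x := by
    rw [dotProduct_mulVec, vecMul_transpose, mulVec_mulVec, hUU, one_mulVec]
  rw [hAx, ← hw, dotProduct, dotProduct, Finset.mul_sum]
  refine Finset.sum_le_sum fun i _ => ?_
  rw [mulVec_diagonal, ← mul_assoc, mul_comm (w i), mul_assoc]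
  exact mul_le_mul_of_nonneg_right (hμ i) (mul_self_nonneg _)

variable [Nonempty n]

theorem IsHermitian.dotProduct_mulVec_le_lamMax {A : Matrix n n ℝ} (hA : A.IsHermitian)
    (x : n → ℝ) : x ⬝ᵥ (A *ᵥ x) ≤ A.lamMax * (x ⬝ᵥ x) :=
  hA.dotProduct_mulVec_le_s6 (fun i => hA.isLamMax_lamMax.2 _ (hA.isRoot_charpoly_eigenvalues i)) x

theorem IsHermitian.lamMax_add_le {A B : Matrix n n ℝ} (hA : A.IsHermitian)
    (hB : B.IsHermitian) : (A + B).lamMax ≤ A.lamMax + B.lamMax := by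
  obtain ⟨v, hv, hAB⟩ := (isRoot_charpoly_iff_exists_mulVec_eq_smul _ _).1
    (hA.add hB).isLamMax_lamMax.1
  have hvv : 0 < v ⬝ᵥ v := by simpa using dotProduct_star_self_pos_iff.2 hv
  refine le_of_mul_le_mul_right ?_ hvv
  calc (A + B).lamMax * (v ⬝ᵥ v) = v ⬝ᵥ (A *ᵥ v) + v ⬝ᵥ (B *ᵥ v) := by
        rw [← dotProduct_add, ← add_mulVec, hAB, dotProduct_smul, smul_eq_mul]
    _ ≤ (A.lamMax + B.lamMax) * (v ⬝ᵥ v) := by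
        rw [add_mul]
        exact add_le_add (hA.dotProduct_mulVec_le_lamMax v) (hB.dotProduct_mulVec_le_lamMax v)

section LinftyOpNorm

attribute [local instance] Matrix.linftyOpNormedRing Matrix.linftyOpNormedAlgebra

theorem lamMax_le_norm (A : Matrix n n ℝ) : A.lamMax ≤ ‖A‖ := by
  refine Real.sSup_le (fun μ hμ => ?_) (norm_nonneg A)
  exact (le_abs_self μ).trans
    (spectrum.norm_le_norm_of_mem (mem_spectrum_iff_isRoot_charpoly.2 hμ))

theorem IsHermitian.abs_lamMax_sub_le {A B : Matrix n n ℝ} (hA : A.IsHermitian)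
    (hB : B.IsHermitian) : |A.lamMax - B.lamMax| ≤ ‖A - B‖ := by
  have h₁ := hB.lamMax_add_le (hA.sub hB)
  have h₂ := hA.lamMax_add_le (hB.sub hA)
  rw [add_sub_cancel] at h₁ h₂
  rw [abs_sub_le_iff]
  constructor <;> linarith [lamMax_le_norm (A - B), lamMax_le_norm (B - A), norm_sub_rev A B]

theorem IsHermitian.continuous_lamMax_add_smul {A C : Matrix n n ℝ} (hA : A.IsHermitian)
    (hC : C.IsHermitian) : Continuous fun t : ℝ => (A + t • C).lamMax := by
  have hM (t : ℝ) : (A + t • C).IsHermitian := hA.add (hC.smul (IsSelfAdjoint.all t))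
  refine (LipschitzWith.of_dist_le_mul fun s t => ?_ : LipschitzWith ‖C‖₊ _).continuous
  calc dist (A + s • C).lamMax (A + t • C).lamMax
      ≤ ‖(A + s • C) - (A + t • C)‖ := (hM s).abs_lamMax_sub_le (hM t)
    _ = ‖(s - t) • C‖ := by rw [add_sub_add_left_eq_sub, sub_smul]
    _ ≤ ‖C‖ * dist s t := by rw [norm_smul, mul_comm, Real.dist_eq, Real.norm_eq_abs]

end LinftyOpNorm

section BlockDiagonal

variable {ι : Type*} [Fintype ι] [DecidableEq ι] {m : ι → Type*} [∀ i, Fintype (m i)]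

theorem blockDiagonal'_mulVec_apply {R : Type*} [NonUnitalNonAssocSemiring R]
    (M : ∀ i, Matrix (m i) (m i) R) (v : (Σ i, m i) → R) (i : ι) (a : m i) :
    (blockDiagonal' M *ᵥ v) ⟨i, a⟩ = (M i *ᵥ fun b => v ⟨i, b⟩) a := by
  rw [mulVec, dotProduct, Fintype.sum_sigma, Finset.sum_eq_single i]
  · simp [mulVec, dotProduct, blockDiagonal'_apply_eq]
  · intro j _ hj
    simp [blockDiagonal'_apply_ne _ _ _ (Ne.symm hj)]
  · simp

variable [∀ i, DecidableEq (m i)]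

theorem exists_isRoot_charpoly_of_isRoot_charpoly_blockDiagonal' {K : Type*} [Field K]
    (M : ∀ i, Matrix (m i) (m i) K) {μ : K} (hμ : (blockDiagonal' M).charpoly.IsRoot μ) :
    ∃ i, (M i).charpoly.IsRoot μ := by
  obtain ⟨v, hv, hMv⟩ := (isRoot_charpoly_iff_exists_mulVec_eq_smul _ _).1 hμ
  obtain ⟨⟨i, a⟩, ha⟩ := Function.ne_iff.1 hv
  refine ⟨i, (isRoot_charpoly_iff_exists_mulVec_eq_smul _ _).2
    ⟨fun b => v ⟨i, b⟩, fun h => ha (congrFun h a), funext fun b => ?_⟩⟩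
  rw [← blockDiagonal'_mulVec_apply, hMv, Pi.smul_apply, Pi.smul_apply]

theorem lamMax_blockDiagonal'_lt [Nonempty (Σ i, m i)] {M : ∀ i, Matrix (m i) (m i) ℝ}
    (hM : ∀ i, (M i).IsHermitian) {y : ℝ} (hy : ∀ i μ, (M i).charpoly.IsRoot μ → μ < y) :
    (blockDiagonal' M).lamMax < y :=
  have ⟨i, hi⟩ := exists_isRoot_charpoly_of_isRoot_charpoly_blockDiagonal' M
    (isHermitian_blockDiagonal'_iff.2 hM).isLamMax_lamMax.1
  hy i _ hi

end BlockDiagonal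

end Matrix

section Odot

variable {p : ℕ} {V : Fin (p + 1) → Type} [∀ i, DecidableEq (V i)]
  (Ms : ∀ i, Matrix (V i) (V i) ℝ) (r : ∀ i, V i)

theorem odotMat_zero : odotMat Ms r 0 = blockDiagonal' Ms := by
  ext ⟨i, a⟩ ⟨j, b⟩
  by_cases h : i = j
  · subst h
    simp [odotMat, blockDiagonal'_apply_eq]
  · simp [odotMat, blockDiagonal'_apply_ne _ _ _ h, h]

theorem odotMat_eq_add_smul (δ : ℝ) :
    odotMat Ms r δ = odotMat Ms r 0 + δ • odotMat (fun _ => 0) r 1 := by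
  ext ⟨i, a⟩ ⟨j, b⟩
  by_cases h : i = j
  · subst h
    simp [odotMat]
  · simp only [Matrix.add_apply, Matrix.smul_apply, odotMat, h, dite_false]
    split_ifs <;> simp

variable {Ms} in
theorem isHermitian_odotMat (hMs : ∀ i, (Ms i).IsHermitian) (δ : ℝ) :
    (odotMat Ms r δ).IsHermitian := by
  ext ⟨i, a⟩ ⟨j, b⟩
  by_cases h : i = j
  · subst h
    simpa [odotMat] using congrFun₂ (hMs i) a b
  · simp only [conjTranspose_apply, star_trivial, odotMat, h, Ne.symm h, dite_false]
    split_ifs <;> tauto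

variable [∀ i, Fintype (V i)]

variable {Ms} in
theorem continuous_lamMax_odotMat (hMs : ∀ i, (Ms i).IsHermitian) :
    Continuous fun δ => (odotMat Ms r δ).lamMax := by
  have : Nonempty (Σ i, V i) := ⟨⟨0, r 0⟩⟩
  refine ((isHermitian_odotMat r hMs 0).continuous_lamMax_add_smul
    (isHermitian_odotMat r (fun _ => isHermitian_zero) 1)).congr fun δ => ?_
  rw [← odotMat_eq_add_smul]

variable {Ms} in
theorem le_lamMax_odotMat (hMs : ∀ i, (Ms i).IsHermitian) {i : Fin (p + 1)} (hi : i ≠ 0)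
    (δ : ℝ) : (Ms 0 (r 0) (r 0) + Ms i (r i) (r i)) / 2 + δ ≤ (odotMat Ms r δ).lamMax := by
  have : Nonempty (Σ i, V i) := ⟨⟨0, r 0⟩⟩
  have hne : (⟨0, r 0⟩ : Σ i, V i) ≠ ⟨i, r i⟩ := fun h => hi (congrArg Sigma.fst h).symm
  set x : (Σ i, V i) → ℝ := Pi.single ⟨0, r 0⟩ 1 + Pi.single ⟨i, r i⟩ 1
  have hxx : x ⬝ᵥ x = 2 := by
    simp [x, dotProduct_add, hne, hne.symm]
    norm_num
  have hxMx : x ⬝ᵥ (odotMat Ms r δ *ᵥ x) = Ms 0 (r 0) (r 0) + Ms i (r i) (r i) + 2 * δ := by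
    simp [x, dotProduct_add, add_dotProduct, mulVec_add, mulVec_single, odotMat, hi, hi.symm]
    ring
  have := (isHermitian_odotMat r hMs δ).dotProduct_mulVec_le_lamMax x
  rw [hxx, hxMx] at this
  linarith

end Odot

theorem stmt6_general {p : ℕ} (hp : 1 ≤ p) {V : Fin (p + 1) → Type} [∀ i, Fintype (V i)]
    [∀ i, DecidableEq (V i)] (r : ∀ i, V i) (Ms : ∀ i, Matrix (V i) (V i) ℝ)
    (hsym : ∀ i, (Ms i).IsSymm) (y : ℝ)
    (hy : ∀ ℓ lam, ((Ms ℓ).charpoly).IsRoot lam → lam < y) :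
    ∃ δ : ℝ, 0 < δ ∧ IsLamMax (odotMat Ms r δ) y := by
  have : Nonempty (Σ i, V i) := ⟨⟨0, r 0⟩⟩
  have hMs : ∀ i, (Ms i).IsHermitian := fun i => isHermitian_iff_isSymm.2 (hsym i)
  have h10 : (1 : Fin (p + 1)) ≠ 0 := by
    simp [Fin.ext_iff, Nat.mod_eq_of_lt (by omega : 1 < p + 1)]
  set g := fun δ => (odotMat Ms r δ).lamMax
  have hg0 : g 0 < y := by
    simp only [g, odotMat_zero]
    exact lamMax_blockDiagonal'_lt hMs hy
  set c := (Ms 0 (r 0) (r 0) + Ms 1 (r 1) (r 1)) / 2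
  set δ₁ := max 0 (y - c)
  have hgδ₁ : y ≤ g δ₁ :=
    calc y ≤ c + δ₁ := by linarith [le_max_right 0 (y - c)]
      _ ≤ g δ₁ := le_lamMax_odotMat r hMs h10 δ₁
  obtain ⟨δ, ⟨hδ0, -⟩, hδ⟩ := intermediate_value_Icc (le_max_left _ _)
    (continuous_lamMax_odotMat r hMs).continuousOn ⟨hg0.le, hgδ₁⟩
  refine ⟨δ, hδ0.lt_of_ne ?_, hδ ▸ (isHermitian_odotMat r hMs δ).isLamMax_lamMax⟩
  rintro rfl
  exact hg0.ne hδ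

/-- Given `y` strictly greater than every eigenvalue of every block, there is a
positive connecting weight `δ` such that `y` is the largest eigenvalue of the
combined matrix. -/
theorem stmt6 {p : ℕ} (hp : 1 ≤ p) {V : Fin (p + 1) → Type} [∀ i, Fintype (V i)]
    [∀ i, DecidableEq (V i)] (G : ∀ i, SimpleGraph (V i)) (hT : ∀ i, (G i).IsTree)
    (r : ∀ i, V i) (Ms : ∀ i, Matrix (V i) (V i) ℝ) (hsym : ∀ i, (Ms i).IsSymm)
    (hmatch : ∀ i, MatchesGraph (Ms i) (G i)) (y : ℝ)
    (hy : ∀ ℓ lam, ((Ms ℓ).charpoly).IsRoot lam → lam < y) :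
    ∃ δ : ℝ, 0 < δ ∧ IsLamMax (odotMat Ms r δ) y :=
  stmt6_general hp r Ms hsym y hy
end

section
/- With T = T_0 ⊙ (T_1,...,T_p) and M as above, for any real y strictly less than every eigenvalue of every M_ℓ (0 ≤ ℓ ≤ p), there exists δ = δ(y) > 0 such that λ_min(M) = y. -/
open Matrix Polynomial

/-!
Put `D_i = M_i - y`, positive definite by hypothesis. Then `M - y` is the block diagonal
matrix `P = ⊕ D_i` plus the rank-two term `δ (v wᵀ + w vᵀ)`, where `v` marks the root of `T₀`
and `w` the roots of `T₁, …, T_p`. Lying in different blocks, `v` and `w` are orthogonal for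
`P⁻¹`, so with `a = vᵀP⁻¹v` and `b = wᵀP⁻¹w` Bessel's inequality for the inner product of `P`
gives `xᵀPx ≥ (vᵀx)²/a + (wᵀx)²/b ≥ -2δ (vᵀx)(wᵀx)` as soon as `δ² a b ≤ 1`. For
`δ = 1/√(ab)` the matrix `M - y` is therefore positive semidefinite, and it kills
`P⁻¹w - δ b P⁻¹v`; so `y` is the smallest eigenvalue of `M`.
-/

section Spectrum

variable {n : Type*} [Fintype n] [DecidableEq n] {A : Matrix n n ℝ} {y : ℝ}

lemma mem_spectrum_sub_smul_one_iff {z : ℝ} :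
    z ∈ spectrum ℝ (A - y • 1) ↔ z + y ∈ spectrum ℝ A := by
  rw [spectrum.add_mem_iff, neg_add_eq_sub, Algebra.algebraMap_eq_smul_one]

lemma posDef_sub_smul_one_of_lt (hA : A.IsHermitian) (h : ∀ z, A.charpoly.IsRoot z → y < z) :
    (A - y • 1).PosDef := by
  have hspec : ∀ z ∈ spectrum ℝ (A - y • 1), 0 < z := fun z hz => by
    linarith [h _ (mem_spectrum_iff_isRoot_charpoly.mp (mem_spectrum_sub_smul_one_iff.mp hz))]
  have hpsd : (A - y • 1).PosSemidef :=
    posSemidef_iff_isHermitian_and_spectrum_nonneg.mpr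
      ⟨hA.sub (isHermitian_one.smul (IsSelfAdjoint.all y)), fun z hz => (hspec z hz).le⟩
  rw [hpsd.posDef_iff_isUnit, ← not_not (a := IsUnit _), ← spectrum.zero_mem_iff ℝ]
  exact fun h0 => (hspec 0 h0).false

lemma isLamMin_of_posSemidef_sub_smul_one {u : n → ℝ} (hA : (A - y • 1).PosSemidef)
    (hu : u ≠ 0) (hAu : (A - y • 1) *ᵥ u = 0) : IsLamMin A y := by
  simp only [IsLamMin, ← mem_spectrum_iff_isRoot_charpoly]
  refine ⟨?_, fun z hz => ?_⟩
  · rw [← zero_add y, ← mem_spectrum_sub_smul_one_iff, spectrum.zero_mem_iff,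
      ← mulVec_injective_iff_isUnit]
    exact fun hinj => hu (hinj (by rw [hAu, mulVec_zero]))
  · have := (posSemidef_iff_isHermitian_and_spectrum_nonneg.mp hA).2
      (mem_spectrum_sub_smul_one_iff.mpr ((sub_add_cancel z y).symm ▸ hz))
    simpa using this

end Spectrum

section RankTwoPerturbation

variable {n : Type*}

lemma Matrix.PosDef.isSymm {P : Matrix n n ℝ} (hP : P.PosDef) : P.IsSymm :=
  isHermitian_iff_isSymm.mp hP.isHermitian

variable [Fintype n]

lemma Matrix.IsSymm.dotProduct_mulVec_comm {A : Matrix n n ℝ} (hA : A.IsSymm) (x z : n → ℝ) :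
    x ⬝ᵥ A *ᵥ z = z ⬝ᵥ A *ᵥ x := by
  simpa only [hA.eq] using dotProduct_transpose_mulVec A x z

lemma dotProduct_vecMulVec_mulVec (x v w : n → ℝ) :
    x ⬝ᵥ vecMulVec v w *ᵥ x = (v ⬝ᵥ x) * (w ⬝ᵥ x) := by
  rw [vecMulVec_mulVec, op_smul_eq_smul, dotProduct_smul, smul_eq_mul, dotProduct_comm x v,
    mul_comm]

variable [DecidableEq n] {P : Matrix n n ℝ} {v w : n → ℝ}

lemma Matrix.PosDef.mulVec_inv_mulVec (hP : P.PosDef) (v : n → ℝ) : P *ᵥ P⁻¹ *ᵥ v = v := by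
  rw [mulVec_mulVec, mul_nonsing_inv _ ((isUnit_iff_isUnit_det _).mp hP.isUnit), one_mulVec]

lemma Matrix.PosDef.sq_div_add_sq_div_le (hP : P.PosDef) (hvw : v ⬝ᵥ P⁻¹ *ᵥ w = 0)
    (x : n → ℝ) :
    (v ⬝ᵥ x) ^ 2 / (v ⬝ᵥ P⁻¹ *ᵥ v) + (w ⬝ᵥ x) ^ 2 / (w ⬝ᵥ P⁻¹ *ᵥ w) ≤ x ⬝ᵥ P *ᵥ x := by
  set a := v ⬝ᵥ P⁻¹ *ᵥ v
  set b := w ⬝ᵥ P⁻¹ *ᵥ w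
  set c := (v ⬝ᵥ x) / a
  set d := (w ⬝ᵥ x) / b
  have hrep : ∀ u, P⁻¹ *ᵥ u ⬝ᵥ P *ᵥ x = u ⬝ᵥ x := fun u => by
    rw [hP.isSymm.dotProduct_mulVec_comm, hP.mulVec_inv_mulVec, dotProduct_comm]
  have hwv : P⁻¹ *ᵥ w ⬝ᵥ v = 0 := by
    rw [dotProduct_comm, hvw]
  have hvw' : P⁻¹ *ᵥ v ⬝ᵥ w = 0 := by
    rw [dotProduct_comm, hP.inv.isSymm.dotProduct_mulVec_comm, hvw]
  have hz := hP.posSemidef.dotProduct_mulVec_nonneg (x - c • P⁻¹ *ᵥ v - d • P⁻¹ *ᵥ w)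
  simp only [star_trivial, mulVec_sub, mulVec_smul, hP.mulVec_inv_mulVec, sub_dotProduct,
    dotProduct_sub, smul_dotProduct, dotProduct_smul, smul_eq_mul, hrep, hwv, hvw'] at hz
  rw [dotProduct_comm (P⁻¹ *ᵥ v), dotProduct_comm (P⁻¹ *ᵥ w), dotProduct_comm x v,
    dotProduct_comm x w] at hz
  -- also true in the junk case `e = 0`, where both sides vanish
  have hsq : ∀ s e : ℝ, s / e * (s / e * e) = s ^ 2 / e := fun s e => by
    rcases eq_or_ne e 0 with rfl | he
    · simp
    · field_simp
  have hc : c * (v ⬝ᵥ x) = (v ⬝ᵥ x) ^ 2 / a := by ring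
  have hd : d * (w ⬝ᵥ x) = (w ⬝ᵥ x) ^ 2 / b := by ring
  linarith [hsq (v ⬝ᵥ x) a, hsq (w ⬝ᵥ x) b]

lemma Matrix.PosDef.posSemidef_add_smul_vecMulVec (hP : P.PosDef) (hvw : v ⬝ᵥ P⁻¹ *ᵥ w = 0)
    {δ : ℝ} (hδ : δ ^ 2 * ((v ⬝ᵥ P⁻¹ *ᵥ v) * (w ⬝ᵥ P⁻¹ *ᵥ w)) = 1) :
    (P + δ • (vecMulVec v w + vecMulVec w v)).PosSemidef := by
  set a := v ⬝ᵥ P⁻¹ *ᵥ v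
  set b := w ⬝ᵥ P⁻¹ *ᵥ w
  have hnonneg : ∀ u, 0 ≤ u ⬝ᵥ P⁻¹ *ᵥ u := fun u => by
    simpa using hP.inv.posSemidef.dotProduct_mulVec_nonneg u
  have ha : 0 < a := (hnonneg v).lt_of_ne fun h => by simp [a, ← h] at hδ
  have hb : 0 < b := (hnonneg w).lt_of_ne fun h => by simp [b, ← h] at hδ
  have hsymm : (P + δ • (vecMulVec v w + vecMulVec w v)).IsHermitian := by
    rw [isHermitian_iff_isSymm]
    refine hP.isSymm.add (IsSymm.smul ?_ δ)
    simp [IsSymm, transpose_vecMulVec, add_comm]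
  refine .of_dotProduct_mulVec_nonneg hsymm fun x => ?_
  rw [star_trivial, add_mulVec, dotProduct_add, smul_mulVec, dotProduct_smul, add_mulVec,
    dotProduct_add, dotProduct_vecMulVec_mulVec, dotProduct_vecMulVec_mulVec, smul_eq_mul]
  have hsq : (v ⬝ᵥ x) ^ 2 / a + (w ⬝ᵥ x) ^ 2 / b + 2 * δ * (v ⬝ᵥ x) * (w ⬝ᵥ x)
      = (v ⬝ᵥ x + δ * a * (w ⬝ᵥ x)) ^ 2 / a := by
    field_simp
    linear_combination (-a * (w ⬝ᵥ x) ^ 2) * hδ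
  linarith [hP.sq_div_add_sq_div_le hvw x,
    div_nonneg (sq_nonneg (v ⬝ᵥ x + δ * a * (w ⬝ᵥ x))) ha.le]

lemma Matrix.PosDef.exists_mulVec_add_smul_vecMulVec_eq_zero (hP : P.PosDef)
    (hvw : v ⬝ᵥ P⁻¹ *ᵥ w = 0) {δ : ℝ}
    (hδ : δ ^ 2 * ((v ⬝ᵥ P⁻¹ *ᵥ v) * (w ⬝ᵥ P⁻¹ *ᵥ w)) = 1) :
    ∃ u ≠ 0, (P + δ • (vecMulVec v w + vecMulVec w v)) *ᵥ u = 0 := by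
  set b := w ⬝ᵥ P⁻¹ *ᵥ w
  have hwv : w ⬝ᵥ P⁻¹ *ᵥ v = 0 := by
    rw [hP.inv.isSymm.dotProduct_mulVec_comm, hvw]
  have hu : w ⬝ᵥ (P⁻¹ *ᵥ w - (δ * b) • P⁻¹ *ᵥ v) = b := by
    rw [dotProduct_sub, dotProduct_smul, hwv, smul_zero, sub_zero]
  refine ⟨P⁻¹ *ᵥ w - (δ * b) • P⁻¹ *ᵥ v, fun h => ?_, ?_⟩
  · rw [h, dotProduct_zero] at hu
    simp [← hu] at hδ
  · simp only [add_mulVec, smul_mulVec, vecMulVec_mulVec, op_smul_eq_smul, mulVec_sub,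
      mulVec_smul, hP.mulVec_inv_mulVec, hvw, hwv]
    linear_combination (norm := module) -(hδ • w)

end RankTwoPerturbation

section BlockDiagonal

variable {ι : Type*} [Fintype ι] [DecidableEq ι] {V : ι → Type*} [∀ i, Fintype (V i)]

lemma dotProduct_blockDiagonal'_mulVec {α : Type*} [CommSemiring α]
    (N : ∀ i, Matrix (V i) (V i) α) (x z : (Σ i, V i) → α) :
    x ⬝ᵥ blockDiagonal' N *ᵥ z = ∑ i, (fun v => x ⟨i, v⟩) ⬝ᵥ N i *ᵥ fun v => z ⟨i, v⟩ := by
  simp only [dotProduct, mulVec, ← Finset.univ_sigma_univ, Finset.sum_sigma, Finset.mul_sum]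
  refine Finset.sum_congr rfl fun i _ => Finset.sum_congr rfl fun a _ => ?_
  rw [Fintype.sum_eq_single i fun j hj => ?_]
  · simp [blockDiagonal'_apply_eq]
  · simp [blockDiagonal'_apply_ne _ _ _ hj.symm]

open scoped ComplexOrder in
lemma Matrix.PosDef.blockDiagonal' {𝕜 : Type*} [RCLike 𝕜] {N : ∀ i, Matrix (V i) (V i) 𝕜}
    (hN : ∀ i, (N i).PosDef) : (blockDiagonal' N).PosDef := by
  refine .of_dotProduct_mulVec_pos ?_ fun x hx => ?_
  · rw [IsHermitian, blockDiagonal'_conjTranspose]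
    exact congrArg _ (funext fun i => (hN i).isHermitian.eq)
  · obtain ⟨i, hi⟩ : ∃ i, (fun v => x ⟨i, v⟩) ≠ 0 := by
      by_contra! h
      exact hx (funext fun a => congrFun (h a.1) a.2)
    rw [dotProduct_blockDiagonal'_mulVec]
    exact Finset.sum_pos' (fun j _ => (hN j).posSemidef.dotProduct_mulVec_nonneg _)
      ⟨i, Finset.mem_univ _, (hN i).dotProduct_mulVec_pos hi⟩

variable [∀ i, DecidableEq (V i)]

lemma inv_blockDiagonal' {K : Type*} [Field K] {N : ∀ i, Matrix (V i) (V i) K}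
    (hN : ∀ i, IsUnit (N i)) : (blockDiagonal' N)⁻¹ = blockDiagonal' fun i => (N i)⁻¹ := by
  refine inv_eq_right_inv ?_
  rw [← blockDiagonal'_mul, ← blockDiagonal'_one]
  exact congrArg _ (funext fun i => mul_nonsing_inv _ ((isUnit_iff_isUnit_det _).mp (hN i)))

end BlockDiagonal

section RootIndicator

variable {ι : Type*} [DecidableEq ι] {V : ι → Type*} [∀ i, DecidableEq (V i)]

def rootIndicator (r : ∀ i, V i) (S : Finset ι) : (Σ i, V i) → ℝ :=
  fun a => if a.1 ∈ S ∧ a.2 = r a.1 then 1 else 0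

lemma rootIndicator_ne_zero (r : ∀ i, V i) {S : Finset ι} {i : ι} (hi : i ∈ S) :
    rootIndicator r S ≠ 0 := fun h => by
  simpa [rootIndicator, hi] using congrFun h ⟨i, r i⟩

lemma rootIndicator_dotProduct_blockDiagonal'_mulVec [Fintype ι] [∀ i, Fintype (V i)]
    (r : ∀ i, V i) {S T : Finset ι} (hST : Disjoint S T) (N : ∀ i, Matrix (V i) (V i) ℝ) :
    rootIndicator r S ⬝ᵥ blockDiagonal' N *ᵥ rootIndicator r T = 0 := by
  rw [dotProduct_blockDiagonal'_mulVec]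
  refine Finset.sum_eq_zero fun i _ => ?_
  by_cases hi : i ∈ S
  · simp [rootIndicator, Finset.disjoint_left.mp hST hi, ← Pi.zero_def]
  · simp [rootIndicator, hi]

end RootIndicator

lemma odotMat_eq {p : ℕ} {V : Fin (p + 1) → Type} [∀ i, DecidableEq (V i)]
    (Ms : ∀ i, Matrix (V i) (V i) ℝ) (r : ∀ i, V i) (δ : ℝ) :
    odotMat Ms r δ = blockDiagonal' Ms + δ • (vecMulVec (rootIndicator r {0}) (rootIndicator r {0}ᶜ)
      + vecMulVec (rootIndicator r {0}ᶜ) (rootIndicator r {0})) := by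
  ext ⟨i, a⟩ ⟨j, b⟩
  by_cases hij : i = j
  · subst hij
    by_cases hi : i = 0 <;> simp [odotMat, rootIndicator, vecMulVec_apply, hi]
  · have hblock := blockDiagonal'_apply_ne Ms a b hij
    rcases eq_or_ne i 0 with rfl | hi
    · simp [odotMat, rootIndicator, hblock, vecMulVec_apply, hij, Ne.symm hij, ite_and]
      split_ifs <;> rfl
    · rcases eq_or_ne j 0 with rfl | hj
      · simp [odotMat, rootIndicator, hblock, vecMulVec_apply, hi, ite_and]
      · simp [odotMat, rootIndicator, hblock, vecMulVec_apply, hi, hj, hij]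

theorem stmt7_general {p : ℕ} (hp : 1 ≤ p) {V : Fin (p + 1) → Type} [∀ i, Fintype (V i)]
    [∀ i, DecidableEq (V i)] (r : ∀ i, V i) (Ms : ∀ i, Matrix (V i) (V i) ℝ)
    (hsym : ∀ i, (Ms i).IsSymm) (y : ℝ)
    (hy : ∀ ℓ lam, ((Ms ℓ).charpoly).IsRoot lam → y < lam) :
    ∃ δ : ℝ, 0 < δ ∧ IsLamMin (odotMat Ms r δ) y := by
  have hD : ∀ i, (Ms i - y • 1).PosDef := fun i =>
    posDef_sub_smul_one_of_lt (isHermitian_iff_isSymm.mpr (hsym i)) (hy i)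
  set P := blockDiagonal' fun i => Ms i - y • 1
  set v := rootIndicator r {0}
  set w := rootIndicator r {0}ᶜ
  have hP : P.PosDef := .blockDiagonal' hD
  have hvw : v ⬝ᵥ P⁻¹ *ᵥ w = 0 := by
    rw [inv_blockDiagonal' fun i => (hD i).isUnit]
    exact rootIndicator_dotProduct_blockDiagonal'_mulVec r disjoint_compl_right _
  have ha : 0 < v ⬝ᵥ P⁻¹ *ᵥ v := by
    simpa using hP.inv.dotProduct_mulVec_pos (rootIndicator_ne_zero r (Finset.mem_singleton_self 0))
  have hb : 0 < w ⬝ᵥ P⁻¹ *ᵥ w := by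
    have h1 : (1 : Fin (p + 1)) ∈ ({0}ᶜ : Finset _) := by
      simp only [Finset.mem_compl, Finset.mem_singleton, Fin.one_eq_zero_iff]
      omega
    simpa using hP.inv.dotProduct_mulVec_pos (rootIndicator_ne_zero r h1)
  set δ := (√((v ⬝ᵥ P⁻¹ *ᵥ v) * (w ⬝ᵥ P⁻¹ *ᵥ w)))⁻¹
  have hδ : δ ^ 2 * ((v ⬝ᵥ P⁻¹ *ᵥ v) * (w ⬝ᵥ P⁻¹ *ᵥ w)) = 1 := by
    rw [inv_pow, Real.sq_sqrt (by positivity), inv_mul_cancel₀ (by positivity)]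
  have hA : odotMat Ms r δ - y • 1 = P + δ • (vecMulVec v w + vecMulVec w v) := by
    rw [odotMat_eq, show P = blockDiagonal' (Ms - y • 1) from rfl, blockDiagonal'_sub,
      blockDiagonal'_smul, blockDiagonal'_one]
    abel
  obtain ⟨u, hu, hAu⟩ := hP.exists_mulVec_add_smul_vecMulVec_eq_zero hvw hδ
  refine ⟨δ, by positivity, isLamMin_of_posSemidef_sub_smul_one ?_ hu (hA ▸ hAu)⟩
  exact hA ▸ hP.posSemidef_add_smul_vecMulVec hvw hδ

/-- Given `y` strictly less than every eigenvalue of every block, there is a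
positive connecting weight `δ` such that `y` is the smallest eigenvalue of the
combined matrix. -/
theorem stmt7 {p : ℕ} (hp : 1 ≤ p) {V : Fin (p + 1) → Type} [∀ i, Fintype (V i)]
    [∀ i, DecidableEq (V i)] (G : ∀ i, SimpleGraph (V i)) (hT : ∀ i, (G i).IsTree)
    (r : ∀ i, V i) (Ms : ∀ i, Matrix (V i) (V i) ℝ) (hsym : ∀ i, (Ms i).IsSymm)
    (hmatch : ∀ i, MatchesGraph (Ms i) (G i)) (y : ℝ)
    (hy : ∀ ℓ lam, ((Ms ℓ).charpoly).IsRoot lam → y < lam) :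
    ∃ δ : ℝ, 0 < δ ∧ IsLamMin (odotMat Ms r δ) y :=
  stmt7_general hp r Ms hsym y hy
end

section
/- Let T be a tree with n vertices whose diameter is 4 and which lies in the family T* (equivalently, T = T_0 ⊙ (T_1,...,T_p) with p ≥ 2 where T_0 is a star with t_0 ≥ 1 leaves centered at the root and each T_i is a star with t_i ≥ 1 leaves centered at its root). Then the symmetric matrix M with all diagonal entries: 0 on the centers of T_1,...,T_p and their leaves, 1 on the main root and on the leaves attached to it; edge weights 1/√(t_i) between the center of T_i and each of its t_i leaves, 1/√(t_0) between the main root and each of its t_0 pendant leaves, and 2/√p between the main root and each center v_i; has distinct eigenvalue set {−2, −1, 0, 1, 3}, with multiplicities m(−2)=1, m(−1)=p−1, m(0)=1−p+Σt_i, m(1)=t_0+p−1, m(3)=1. -/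
open Matrix Polynomial

/-- The vertex set of the diameter-4 tree in `T*`: the main root (`Unit`), its `t₀`
pendant leaves, the `p` centers `v₁,…,v_p`, and the `t i` leaves of each center. -/
abbrev V15 (t₀ p : ℕ) (t : Fin p → ℕ) : Type :=
  Unit ⊕ Fin t₀ ⊕ Fin p ⊕ (Σ i : Fin p, Fin (t i))

/-- The weighted matrix of the diameter-4 tree: diagonal `1` on the main root and its
leaves, `0` on the centers and their leaves; edge weights `1/√t₀` (root to its leaves),
`2/√p` (root to centers) and `1/√(t i)` (center `i` to its leaves). -/
noncomputable def M15 (t₀ p : ℕ) (t : Fin p → ℕ) :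
    Matrix (V15 t₀ p t) (V15 t₀ p t) ℝ := fun a b =>
  match a, b with
  | Sum.inl _, Sum.inl _ => 1
  | Sum.inl _, Sum.inr (Sum.inl _) => 1 / Real.sqrt t₀
  | Sum.inr (Sum.inl _), Sum.inl _ => 1 / Real.sqrt t₀
  | Sum.inr (Sum.inl x), Sum.inr (Sum.inl y) => if x = y then 1 else 0
  | Sum.inl _, Sum.inr (Sum.inr (Sum.inl _)) => 2 / Real.sqrt p
  | Sum.inr (Sum.inr (Sum.inl _)), Sum.inl _ => 2 / Real.sqrt p
  | Sum.inr (Sum.inr (Sum.inl i)), Sum.inr (Sum.inr (Sum.inr ⟨j, _⟩)) =>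
      if i = j then 1 / Real.sqrt (t i) else 0
  | Sum.inr (Sum.inr (Sum.inr ⟨j, _⟩)), Sum.inr (Sum.inr (Sum.inl i)) =>
      if i = j then 1 / Real.sqrt (t i) else 0
  | _, _ => 0

/-! After ordering the vertices as ((root, root leaves), centres), centre leaves, `det (x - M)`
is computed by three Schur complements with respect to scalar diagonal blocks. The leaves of
each centre contribute `x ^ tᵢ` and turn the centre's diagonal entry into `x - x⁻¹` (the weights
`1/√tᵢ` are chosen so that their squares sum to `1`); the centres then contribute
`(x - x⁻¹) ^ p` and lower the root entry by `4 / (x - x⁻¹)`; the root leaves finally contribute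
`(x - 1) ^ t₀` and lower it by `1 / (x - 1)`. Away from `x = 0, ±1` the product simplifies to
`x ^ (Σ tᵢ - p + 1) (x + 1) ^ (p - 1) (x - 1) ^ (t₀ + p - 1) (x - 3) (x + 2)`, so this is the
characteristic polynomial. -/

section SchurComplement

variable {K m n : Type*} [Field K] [Fintype m] [Fintype n] [DecidableEq m] [DecidableEq n]

theorem Matrix.det_fromBlocks_smul_one₂₂ (A : Matrix m m K) (B : Matrix m n K)
    (C : Matrix n m K) {c : K} (hc : c ≠ 0) :
    (fromBlocks A B C (c • 1)).det = c ^ Fintype.card n * (A - c⁻¹ • (B * C)).det := by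
  have hinv : c • (1 : Matrix n n K) * (c⁻¹ • 1) = 1 := by
    rw [smul_mul_smul_comm, mul_inv_cancel₀ hc, one_mul, one_smul]
  let := invertibleOfRightInverse _ _ hinv
  rw [det_fromBlocks₂₂, invOf_eq_right_inv hinv,
    det_smul, det_one, mul_one, Matrix.mul_smul, Matrix.mul_one, Matrix.smul_mul]

end SchurComplement

theorem le_sum_of_forall_pos {n : ℕ} {f : Fin n → ℕ} (hf : ∀ i, 0 < f i) : n ≤ ∑ i, f i := by
  simpa using Finset.card_nsmul_le_sum Finset.univ f 1 fun i _ => hf i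

theorem sum_const_div_sqrt_mul_self {n : ℕ} (hn : 0 < n) (c : ℝ) :
    ∑ _ : Fin n, c / √n * (c / √n) = c ^ 2 := by
  have hn' : (0 : ℝ) < n := by exact_mod_cast hn
  rw [Finset.sum_const, Finset.card_univ, Fintype.card_fin, nsmul_eq_mul, div_mul_div_comm,
    Real.mul_self_sqrt hn'.le]
  field_simp

namespace M15

variable (t₀ p : ℕ) (t : Fin p → ℕ)

noncomputable def rootLeafEdges : Matrix Unit (Fin t₀) ℝ := of fun _ _ => -(1 / √t₀)

noncomputable def rootStar (r d : ℝ) : Matrix (Unit ⊕ Fin t₀) (Unit ⊕ Fin t₀) ℝ :=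
  fromBlocks (of fun _ _ => r) (rootLeafEdges t₀) (rootLeafEdges t₀)ᵀ (d • 1)

noncomputable def rootCenterEdges : Matrix (Unit ⊕ Fin t₀) (Fin p) ℝ :=
  fromRows (of fun _ _ => -(2 / √p)) 0

noncomputable def core (r d s : ℝ) :
    Matrix ((Unit ⊕ Fin t₀) ⊕ Fin p) ((Unit ⊕ Fin t₀) ⊕ Fin p) ℝ :=
  fromBlocks (rootStar t₀ r d) (rootCenterEdges t₀ p) (rootCenterEdges t₀ p)ᵀ (s • 1)

noncomputable def centerLeafEdges : Matrix ((Unit ⊕ Fin t₀) ⊕ Fin p) (Σ i, Fin (t i)) ℝ :=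
  fromRows 0 (of fun i l => if i = l.1 then -(1 / √(t i)) else 0)

def reorder : ((Unit ⊕ Fin t₀) ⊕ Fin p) ⊕ (Σ i, Fin (t i)) ≃ V15 t₀ p t :=
  (Equiv.sumAssoc _ _ _).trans (Equiv.sumAssoc _ _ _)

theorem submatrix_reorder (x : ℝ) :
    (scalar _ x - M15 t₀ p t).submatrix (reorder t₀ p t) (reorder t₀ p t) =
      fromBlocks (core t₀ p (x - 1) (x - 1) x) (centerLeafEdges t₀ p t)
        (centerLeafEdges t₀ p t)ᵀ (x • 1) := by
  ext (((_ | _) | _) | ⟨_, _⟩) (((_ | _) | _) | ⟨_, _⟩) <;>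
    simp [reorder, M15, core, rootStar, rootLeafEdges, rootCenterEdges, centerLeafEdges,
      one_apply, eq_comm] <;>
    aesop

variable {t₀ p t}

theorem rootLeafEdges_mul_transpose (ht₀ : 0 < t₀) :
    rootLeafEdges t₀ * (rootLeafEdges t₀)ᵀ = of fun _ _ => 1 := by
  ext
  simpa [rootLeafEdges, mul_apply] using sum_const_div_sqrt_mul_self ht₀ 1

theorem rootCenterEdges_mul_transpose (hp : 0 < p) :
    rootCenterEdges t₀ p * (rootCenterEdges t₀ p)ᵀ = fromBlocks (of fun _ _ => 4) 0 0 0 := by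
  rw [rootCenterEdges, transpose_fromRows, fromRows_mul_fromCols]
  simp only [transpose_zero, Matrix.zero_mul, Matrix.mul_zero]
  congr
  ext
  rw [of_apply, show (4 : ℝ) = 2 ^ 2 by norm_num]
  simpa [mul_apply] using sum_const_div_sqrt_mul_self hp 2

theorem centerLeafEdges_mul_transpose (ht : ∀ i, 0 < t i) :
    centerLeafEdges t₀ p t * (centerLeafEdges t₀ p t)ᵀ = fromBlocks 0 0 0 1 := by
  rw [centerLeafEdges, transpose_fromRows, fromRows_mul_fromCols]
  simp only [transpose_zero, Matrix.zero_mul, Matrix.mul_zero]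
  congr
  ext i j
  rw [mul_apply, ← Finset.univ_sigma_univ, Finset.sum_sigma, Finset.sum_eq_single i]
  · by_cases h : i = j
    · subst h; simpa using sum_const_div_sqrt_mul_self (ht i) 1
    · simp [h, Ne.symm h]
  · intro k _ hk; simp [Ne.symm hk]
  · simp

theorem rootStar_sub_smul (r d a c : ℝ) :
    rootStar t₀ r d - c • fromBlocks (of fun _ _ => a) 0 0 0 = rootStar t₀ (r - c * a) d := by
  ext (_ | _) (_ | _) <;> simp [rootStar]

theorem core_sub_smul (r d s c : ℝ) :
    core t₀ p r d s - c • fromBlocks 0 0 0 1 = core t₀ p r d (s - c) := by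
  ext (_ | _) (_ | _) <;> simp [core, one_apply, apply_ite₂ (· - ·)]

theorem det_rootStar (ht₀ : 0 < t₀) {d : ℝ} (hd : d ≠ 0) (r : ℝ) :
    (rootStar t₀ r d).det = d ^ t₀ * (r - d⁻¹) := by
  rw [rootStar, det_fromBlocks_smul_one₂₂ _ _ _ hd, rootLeafEdges_mul_transpose ht₀, det_unique,
    Fintype.card_fin]
  simp

theorem det_core (hp : 0 < p) (ht₀ : 0 < t₀) {d s : ℝ} (hd : d ≠ 0) (hs : s ≠ 0) (r : ℝ) :
    (core t₀ p r d s).det = s ^ p * d ^ t₀ * (r - 4 * s⁻¹ - d⁻¹) := by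
  rw [core, det_fromBlocks_smul_one₂₂ _ _ _ hs, rootCenterEdges_mul_transpose hp,
    rootStar_sub_smul, det_rootStar ht₀ hd, Fintype.card_fin]
  ring

theorem det_scalar_sub (hp : 0 < p) (ht₀ : 0 < t₀) (ht : ∀ i, 0 < t i) {x : ℝ}
    (hx : x ≠ 0) (hx₁ : x - 1 ≠ 0) (hx' : x - x⁻¹ ≠ 0) :
    (scalar _ x - M15 t₀ p t).det =
      x ^ (∑ i, t i) * (x - x⁻¹) ^ p * (x - 1) ^ t₀ *
        (x - 1 - 4 * (x - x⁻¹)⁻¹ - (x - 1)⁻¹) := by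
  rw [← det_submatrix_equiv_self (reorder t₀ p t), submatrix_reorder,
    det_fromBlocks_smul_one₂₂ _ _ _ hx, centerLeafEdges_mul_transpose ht, core_sub_smul,
    det_core hp ht₀ hx₁ hx', Fintype.card_sigma]
  simp only [Fintype.card_fin]
  ring

variable (t₀ p t) in
/-- The count `∑ i, t i - p + 1` uses truncated subtraction; it is the intended one because
every `t i` is positive. -/
noncomputable def eigenvalues : Multiset ℝ :=
  Multiset.replicate (∑ i, t i - p + 1) 0 + Multiset.replicate (p - 1) (-1) +
    Multiset.replicate (t₀ + p - 1) 1 + {3, -2}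

theorem charpoly_eq_prod_eigenvalues (hp : 0 < p) (ht₀ : 0 < t₀) (ht : ∀ i, 0 < t i) :
    (M15 t₀ p t).charpoly = ((eigenvalues t₀ p t).map (X - C ·)).prod := by
  obtain ⟨a, ha⟩ := Nat.exists_eq_add_of_le (le_sum_of_forall_pos ht)
  obtain ⟨k, rfl⟩ := Nat.exists_eq_add_of_le' hp
  refine eq_of_infinite_eval_eq _ _ ((Set.Ioi_infinite 3).mono fun x (hx : 3 < x) => ?_)
  have hx' : x - x⁻¹ = (x - 1) * (x + 1) / x := by field_simp; ring
  have : x - 1 ≠ 0 := by linarith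
  have : x + 1 ≠ 0 := by linarith
  rw [Set.mem_ofPred_eq, eval_charpoly, det_scalar_sub hp ht₀ ht (by positivity) (by linarith)
    (by rw [hx']; positivity), hx', ha]
  simp [eigenvalues, ha, div_pow, mul_pow, pow_add, pow_succ]
  field_simp
  ring

end M15

/-- The matrix `M15` has distinct eigenvalue set `{−2, −1, 0, 1, 3}` with
multiplicities `1, p − 1, 1 − p + Σ tᵢ, t₀ + p − 1, 1` respectively. -/
theorem stmt15 (t₀ p : ℕ) (t : Fin p → ℕ) (hp : 2 ≤ p) (ht₀ : 1 ≤ t₀)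
    (ht : ∀ i, 1 ≤ t i) :
    distEig (M15 t₀ p t) = ({-2, -1, 0, 1, 3} : Finset ℝ) ∧
    multEig (M15 t₀ p t) (-2) = 1 ∧
    multEig (M15 t₀ p t) (-1) + 1 = p ∧
    multEig (M15 t₀ p t) 0 + p = 1 + ∑ i, t i ∧
    multEig (M15 t₀ p t) 1 + 1 = t₀ + p ∧
    multEig (M15 t₀ p t) 3 = 1 := by
  have hroots : (M15 t₀ p t).charpoly.roots = M15.eigenvalues t₀ p t := by
    rw [M15.charpoly_eq_prod_eigenvalues (by omega) ht₀ ht, roots_multiset_prod_X_sub_C]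
  have hmult (μ : ℝ) : multEig (M15 t₀ p t) μ = (M15.eigenvalues t₀ p t).count μ := by
    rw [multEig, ← count_roots, hroots]
  have hle : p ≤ ∑ i, t i := le_sum_of_forall_pos ht
  refine ⟨?_, ?_, ?_, ?_, ?_, ?_⟩
  · ext μ
    rw [distEig, Multiset.mem_toFinset, hroots]
    simp [M15.eigenvalues, Multiset.mem_replicate, show p - 1 ≠ 0 by omega,
      show t₀ + p - 1 ≠ 0 by omega]
    tauto
  all_goals norm_num [hmult, M15.eigenvalues, Multiset.count_replicate] <;> omega
end
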